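/- arXiv:1102.2734 — 6 statements merged into one kernel-verified Lean document; each statement's English description precedes it below -/
import Mathlib

section
/- The trelliswidth of an (n,k) MDS code C over a finite field F_q is given by τ(C) = min{k, n − k + 1}. -/
open Module

/-- The submodule of vectors supported on `J` (i.e. zero outside `J`). -/
def supportedOn (F : Type) [Field F] {n : ℕ} (J : Set (Fin n)) : Submodule F (Fin n → F) :=
  Submodule.pi Jᶜ fun _ => ⊥

/-- Dimension of the shortening `C_J` of the code `C` to the coordinates in `J`. -/
noncomputable def shortDim {F : Type} [Field F] {n : ℕ}
    (C : Submodule F (Fin n → F)) (J : Set (Fin n)) : ℕ :=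
  finrank F ↥(C ⊓ supportedOn F J)

/-- Hamming weight of a vector. -/
noncomputable def hWeight {F : Type} [Field F] {n : ℕ} (c : Fin n → F) : ℕ :=
  {i | c i ≠ 0}.ncard

/-- Minimum distance of a linear code. -/
noncomputable def minDist {F : Type} [Field F] {n : ℕ} (C : Submodule F (Fin n → F)) : ℕ :=
  sInf {w : ℕ | ∃ c ∈ C, c ≠ (0 : Fin n → F) ∧ hWeight c = w}

/-- Trelliswidth: the least branch complexity of any trellis realization of `C`,
minimized over all orderings (bijections from positions to coordinates) of `C`. -/
noncomputable def trellisWidth {F : Type} [Field F] {n : ℕ}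
    (C : Submodule F (Fin n → F)) : ℕ :=
  sInf {t : ℕ | ∃ π : Equiv.Perm (Fin n),
    t = Finset.univ.sup fun i : Fin n =>
      finrank F ↥C - shortDim C (⇑π '' {j | j < i}) - shortDim C (⇑π '' {j | i < j})}

/-! An `(n,k)` code with minimum distance `d > n - k` has shortenings of the largest possible
dimension, `dim C_J = |J| - (n - k)`: the lower bound is dimension counting in `F^n`, and the
upper bound holds because a nonzero codeword of `C_J` has weight `> n - k`, so restricting `C_J`
to all but `n - k` coordinates of `J` is injective. Hence, for every ordering, the branch
complexity at position `i` is `k - (i - (n - k)) - (n - 1 - i - (n - k))`, whose maximum over `i`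
is `min k (n - k + 1)`. -/

section ShortenedCodes

variable {F : Type} [Field F] {n : ℕ}

lemma mem_supportedOn {J : Set (Fin n)} {v : Fin n → F} :
    v ∈ supportedOn F J ↔ ∀ i ∉ J, v i = 0 := by
  simp [supportedOn, Submodule.mem_pi]

noncomputable def supportedOnEquiv (J : Set (Fin n)) : supportedOn F J ≃ₗ[F] (J → F) := by
  classical
  refine LinearEquiv.ofBijective ((LinearMap.funLeft F F Subtype.val).domRestrict _) ⟨?_, ?_⟩
  · intro v w h
    ext i
    by_cases hi : i ∈ J
    · exact congrFun h ⟨i, hi⟩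
    · rw [mem_supportedOn.mp v.2 i hi, mem_supportedOn.mp w.2 i hi]
  · intro f
    refine ⟨⟨fun i => if h : i ∈ J then f ⟨i, h⟩ else 0, ?_⟩, ?_⟩
    · exact mem_supportedOn.mpr fun i hi => dif_neg hi
    · ext j
      exact dif_pos j.2

lemma finrank_fun_set (J : Set (Fin n)) : finrank F (J → F) = J.ncard := by
  classical
  rw [finrank_fintype_fun_eq_card, Fintype.card_eq_nat_card, Nat.card_coe_set_eq]

lemma finrank_supportedOn (J : Set (Fin n)) : finrank F (supportedOn F J) = J.ncard :=
  (supportedOnEquiv J).finrank_eq.trans (finrank_fun_set J)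

lemma finrank_le_length (C : Submodule F (Fin n → F)) : finrank F C ≤ n := by
  simpa using Submodule.finrank_le C

lemma minDist_le_hWeight {C : Submodule F (Fin n → F)} {c : Fin n → F} (hc : c ∈ C)
    (hc0 : c ≠ 0) : minDist C ≤ hWeight c :=
  Nat.sInf_le ⟨c, hc, hc0, rfl⟩

lemma ncard_sub_le_shortDim (C : Submodule F (Fin n → F)) (J : Set (Fin n)) :
    J.ncard - (n - finrank F C) ≤ shortDim C J := by
  have hsum := Submodule.finrank_sup_add_finrank_inf_eq C (supportedOn F J)
  have hsup := finrank_le_length (C ⊔ supportedOn F J)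
  rw [finrank_supportedOn] at hsum
  unfold shortDim
  omega

lemma shortDim_le_of_lt_minDist {C : Submodule F (Fin n → F)} {m : ℕ} (hm : m < minDist C)
    (J : Set (Fin n)) : shortDim C J ≤ J.ncard - m := by
  obtain ⟨S, hSJ, hS⟩ := Set.exists_subset_card_eq (min_le_left J.ncard m)
  have hinj : Function.Injective
      ((LinearMap.funLeft F F ((↑) : ↥(J \ S) → Fin n)).domRestrict (C ⊓ supportedOn F J)) := by
    rw [injective_iff_map_eq_zero]
    intro v hv
    have hsupp : {i | v.1 i ≠ 0} ⊆ S := by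
      intro i hi
      by_contra hiS
      by_cases hiJ : i ∈ J
      · exact hi (congrFun hv ⟨i, hiJ, hiS⟩)
      · exact hi (mem_supportedOn.mp v.2.2 i hiJ)
    by_contra hv0
    have hweight : minDist C ≤ hWeight v.1 :=
      minDist_le_hWeight v.2.1 fun h => hv0 (Subtype.ext h)
    have := Set.ncard_le_ncard hsupp
    unfold hWeight at hweight
    omega
  have := LinearMap.finrank_le_finrank_of_injective hinj
  rw [finrank_fun_set, Set.ncard_sdiff hSJ, hS] at this
  unfold shortDim
  omega

lemma shortDim_eq_of_lt_minDist {C : Submodule F (Fin n → F)}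
    (hd : n - finrank F C < minDist C) (J : Set (Fin n)) :
    shortDim C J = J.ncard - (n - finrank F C) :=
  (shortDim_le_of_lt_minDist hd J).antisymm (ncard_sub_le_shortDim C J)

lemma ncard_setOf_lt (i : Fin n) : {j | j < i}.ncard = i := by
  rw [Set.Iio_def, Set.ncard_eq_toFinset_card', Set.toFinset_Iio, Fin.card_Iio]

lemma ncard_setOf_gt (i : Fin n) : {j | i < j}.ncard = n - 1 - i := by
  rw [Set.Ioi_def, Set.ncard_eq_toFinset_card', Set.toFinset_Ioi, Fin.card_Ioi]

lemma sup_mdsBranchProfile {k : ℕ} (hkn : k ≤ n) :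
    (Finset.univ.sup fun i : Fin n => k - (i - (n - k)) - (n - 1 - i - (n - k)))
      = min k (n - k + 1) := by
  refine le_antisymm (Finset.sup_le fun i _ => by omega) ?_
  rcases Nat.eq_zero_or_pos k with rfl | hk
  · simp
  · let i : Fin n := ⟨min (k - 1) (n - k), by omega⟩
    refine le_trans ?_ (Finset.le_sup (f := fun i : Fin n =>
      k - (i - (n - k)) - (n - 1 - i - (n - k))) (Finset.mem_univ i))
    simp only [i]
    omega

lemma trellisWidth_eq_of_forall_perm {C : Submodule F (Fin n → F)} {w : ℕ}
    (h : ∀ π : Equiv.Perm (Fin n), (Finset.univ.sup fun i : Fin n =>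
      finrank F ↥C - shortDim C (⇑π '' {j | j < i}) - shortDim C (⇑π '' {j | i < j})) = w) :
    trellisWidth C = w := by
  have hset : {t : ℕ | ∃ π : Equiv.Perm (Fin n), t = Finset.univ.sup fun i : Fin n =>
      finrank F ↥C - shortDim C (⇑π '' {j | j < i}) - shortDim C (⇑π '' {j | i < j})} = {w} := by
    ext t
    simp [h]
  rw [trellisWidth, hset, csInf_singleton]

end ShortenedCodes

theorem stmt4_general {F : Type} [Field F] {n k : ℕ}
    (C : Submodule F (Fin n → F)) (hk : finrank F ↥C = k)
    (hmds : minDist C = n - k + 1) :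
    trellisWidth C = min k (n - k + 1) := by
  have hkn : k ≤ n := hk ▸ finrank_le_length C
  have hshort := shortDim_eq_of_lt_minDist (C := C) (by omega)
  rw [← sup_mdsBranchProfile hkn]
  refine trellisWidth_eq_of_forall_perm fun π => Finset.sup_congr rfl fun i _ => ?_
  rw [hshort, hshort, Set.ncard_image_of_injective _ π.injective,
    Set.ncard_image_of_injective _ π.injective, ncard_setOf_lt, ncard_setOf_gt, hk]

/-- the trelliswidth of an `(n,k)` MDS code is `min {k, n−k+1}`. -/
theorem stmt4 {F : Type} [Field F] [Fintype F] {n k : ℕ}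
    (C : Submodule F (Fin n → F)) (hk : finrank F ↥C = k)
    (hmds : minDist C = n - k + 1) :
    trellisWidth C = min k (n - k + 1) :=
  stmt4_general C hk hmds
end

section
/- For integers 0 ≤ r ≤ m, let T(r,m) = Σ_{j=0}^{r} C(m−2j−1, r−j) if m ≥ 2r+1 and T(r,m) = 1 + Σ_{j=0}^{m−r−1} C(m−2j−1, r−j) if m < 2r+1 (this is the trelliswidth of RM(r,m)). Then k(r,m) − T(r,m) = Σ_{i=0}^{min{2(r−1), m−1}} k(r−1−⌈i/2⌉, m−1−i), where the sum on the right is empty when r = 0. -/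
open Module

/-- `k(r,m) = ∑_{j=0}^{r} C(m,j)`, the dimension of `RM(r,m)`. -/
def kRM (r m : ℕ) : ℕ := ∑ j ∈ Finset.range (r + 1), Nat.choose m j

/-- The claimed value `τ(r,m)` of the trelliswidth of `RM(r,m)`. -/
def tauRM (r m : ℕ) : ℕ :=
  if 2 * r + 1 ≤ m then ∑ j ∈ Finset.range (r + 1), Nat.choose (m - (2 * j + 1)) (r - j)
  else 1 + ∑ j ∈ Finset.range (m - r), Nat.choose (m - (2 * j + 1)) (r - j)

/-!
Both sides satisfy the same recursion under `(r, m) ↦ (r + 1, m + 2)`. Peeling off the term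
`j = 0` of `τ` gives `τ(r+1, m+2) = C(m+1, r+1) + τ(r, m)`, and two applications of Pascal's rule
for the partial sums `k` give `k(r+2, m+2) = k(r+1, m) + k(r+1, m+1) + k(r, m) + C(m+1, r+2)`,
where `k(r+1, m+1) + k(r, m)` are exactly the first two terms of the sum on the right. The
recursion bottoms out at `r = 1`, and at `m ≤ r`, where `k(r, m) = 2^m`, `τ(r, m) = 1` and the sum
is the geometric sum `2^(m-1) + ⋯ + 1`.
-/

open Finset

lemma kRM_zero_left (m : ℕ) : kRM 0 m = 1 := by
  simp [kRM]

lemma kRM_succ_left (r m : ℕ) : kRM (r + 1) m = kRM r m + m.choose (r + 1) :=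
  sum_range_succ _ _

lemma kRM_one_left (m : ℕ) : kRM 1 m = m + 1 := by
  simp [kRM, sum_range_succ, add_comm]

lemma kRM_of_le {r m : ℕ} (h : m ≤ r) : kRM r m = 2 ^ m := by
  rw [kRM, ← Nat.sum_range_choose]
  refine (sum_subset (range_subset_range.2 (by omega)) fun j _ hj => ?_).symm
  exact Nat.choose_eq_zero_of_lt (by simpa using hj)

lemma kRM_succ_succ (r m : ℕ) : kRM (r + 1) (m + 1) = kRM (r + 1) m + kRM r m := by
  simp only [kRM, sum_range_succ' (fun j => (m + 1).choose j), sum_range_succ' (fun j => m.choose j),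
    Nat.choose_succ_succ, sum_add_distrib, Nat.choose_zero_right]
  ring

lemma kRM_add_two_add_two (r m : ℕ) :
    kRM (r + 2) (m + 2) = kRM (r + 1) m + kRM (r + 1) (m + 1) + kRM r m + (m + 1).choose (r + 2) := by
  have h₁ : kRM (r + 2) (m + 2) = kRM (r + 2) (m + 1) + kRM (r + 1) (m + 1) :=
    kRM_succ_succ _ _
  have h₂ : kRM (r + 2) (m + 1) = kRM (r + 1) (m + 1) + (m + 1).choose (r + 2) :=
    kRM_succ_left _ _
  have h₃ := kRM_succ_succ r m
  omega

lemma tauRM_of_le {r m : ℕ} (h : m ≤ r) : tauRM r m = 1 := by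
  simp [tauRM, show ¬2 * r + 1 ≤ m by omega, Nat.sub_eq_zero_of_le h]

lemma tauRM_zero_left (m : ℕ) : tauRM 0 m = 1 := by
  rcases Nat.eq_zero_or_pos m with rfl | hm
  · exact tauRM_of_le le_rfl
  · simp [tauRM, show 1 ≤ m by omega]

lemma tauRM_succ_add_two (r m : ℕ) : tauRM (r + 1) (m + 2) = (m + 1).choose (r + 1) + tauRM r m := by
  rcases lt_or_ge m r with hmr | hrm
  · rw [tauRM_of_le (by omega), tauRM_of_le hmr.le, Nat.choose_eq_zero_of_lt (by omega)]
  have hterm : ∀ j, (m + 2 - (2 * (j + 1) + 1)).choose (r + 1 - (j + 1)) =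
      (m - (2 * j + 1)).choose (r - j) := fun j => by congr 1 <;> omega
  unfold tauRM
  by_cases h : 2 * r + 1 ≤ m
  · rw [if_pos (by omega), if_pos h, sum_range_succ' _ (r + 1)]
    simp only [hterm, mul_zero, zero_add, Nat.add_one_sub_one, tsub_zero]
    ring
  · rw [if_neg (by omega), if_neg h, show m + 2 - (r + 1) = m - r + 1 by omega, sum_range_succ']
    simp only [hterm, mul_zero, zero_add, Nat.add_one_sub_one, tsub_zero]
    ring

/-- The right-hand side of the identity, for `r ≥ 1`; `(i + 1) / 2` is `⌈i / 2⌉`. -/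
def kRMSum (r m : ℕ) : ℕ :=
  ∑ i ∈ range (min (2 * (r - 1)) (m - 1) + 1), kRM (r - 1 - (i + 1) / 2) (m - 1 - i)

lemma kRMSum_one_left (m : ℕ) : kRMSum 1 m = 1 := by
  simp [kRMSum, kRM_zero_left]

lemma kRMSum_add_two_add_two (r : ℕ) {m : ℕ} (hm : 1 ≤ m) :
    kRMSum (r + 2) (m + 2) = kRM (r + 1) (m + 1) + kRM r m + kRMSum (r + 1) m := by
  have hlen : min (2 * (r + 2 - 1)) (m + 2 - 1) + 1 = min (2 * (r + 1 - 1)) (m - 1) + 1 + 2 := by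
    omega
  have hterm : ∀ i, kRM (r + 2 - 1 - (i + 2 + 1) / 2) (m + 2 - 1 - (i + 2)) =
      kRM (r + 1 - 1 - (i + 1) / 2) (m - 1 - i) := fun i => by congr 1 <;> omega
  rw [kRMSum, hlen, sum_range_succ', sum_range_succ']
  simp only [hterm]
  simp only [kRMSum, zero_add, Nat.reduceDiv, Nat.add_sub_cancel, Nat.add_one_sub_one, tsub_zero]
  ring

lemma kRMSum_of_le {r m : ℕ} (hm : 1 ≤ m) (h : m ≤ r) : kRMSum r m + 1 = 2 ^ m := by
  have hterm : ∀ i ∈ range m, kRM (r - 1 - (i + 1) / 2) (m - 1 - i) = 2 ^ (m - 1 - i) :=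
    fun i hi => kRM_of_le (by simp at hi; omega)
  rw [kRMSum, show min (2 * (r - 1)) (m - 1) + 1 = m by omega, sum_congr rfl hterm,
    sum_range_reflect (fun i => 2 ^ i), Nat.geomSum_eq le_rfl, Nat.div_one]
  have := Nat.one_le_two_pow (n := m)
  omega

lemma kRM_eq_tauRM_add_kRMSum_of_le {r m : ℕ} (hm : 1 ≤ m) (h : m ≤ r) :
    kRM r m = tauRM r m + kRMSum r m := by
  rw [kRM_of_le h, tauRM_of_le h, ← kRMSum_of_le hm h, add_comm]

theorem kRM_eq_tauRM_add_kRMSum {r m : ℕ} (hr : 1 ≤ r) (hm : 1 ≤ m) :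
    kRM r m = tauRM r m + kRMSum r m := by
  induction r, hr using Nat.le_induction generalizing m with
  | base =>
    rcases le_or_gt m 1 with hm₁ | hm₁
    · exact kRM_eq_tauRM_add_kRMSum_of_le hm hm₁
    obtain ⟨m, rfl⟩ : ∃ m', m = m' + 2 := ⟨m - 2, by omega⟩
    rw [kRM_one_left, tauRM_succ_add_two, tauRM_zero_left, kRMSum_one_left, Nat.choose_one_right]
  | succ r hr ih =>
    rcases le_or_gt m (r + 1) with hmr | hrm
    · exact kRM_eq_tauRM_add_kRMSum_of_le hm hmr
    obtain ⟨m, rfl⟩ : ∃ m', m = m' + 2 := ⟨m - 2, by omega⟩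
    obtain ⟨r, rfl⟩ : ∃ r', r = r' + 1 := ⟨r - 1, by omega⟩
    rw [kRM_add_two_add_two, tauRM_succ_add_two, kRMSum_add_two_add_two r (by omega),
      ih (by omega)]
    ring

/-- `k(r,m) − T(r,m) = ∑_{i=0}^{min{2(r−1), m−1}} k(r−1−⌈i/2⌉, m−1−i)`,
the sum on the right being empty when `r = 0`. -/
theorem stmt7 (r m : ℕ) (hrm : r ≤ m) :
    (kRM r m : ℤ) - tauRM r m =
      if r = 0 then 0
      else ∑ i ∈ Finset.range (min (2 * (r - 1)) (m - 1) + 1),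
        (kRM (r - 1 - (i + 1) / 2) (m - 1 - i) : ℤ) := by
  rcases Nat.eq_zero_or_pos r with rfl | hr
  · simp [kRM_zero_left, tauRM_zero_left]
  rw [if_neg hr.ne', kRM_eq_tauRM_add_kRMSum hr (hr.trans_le hrm), kRMSum]
  push_cast
  ring
end

section
/- Let m ≥ 3, n = 2^m, and let T be a cubic tree with n leaves. Let W = {v : v an internal node of T with n/2 ≤ n_{e_3(v),v} ≤ 2n/3}; then W is nonempty. Let v* be an element of W for which n_{e_3(v),v} is maximum over v ∈ W. Then n/6 < n_{e_2(v*),v*} < n/3. -/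
open Module

/-- Degree of a vertex (the number of its neighbours). -/
noncomputable def deg {V : Type} (T : SimpleGraph V) (v : V) : ℕ :=
  (T.neighborSet v).ncard

/-- The set of leaves (degree-1 vertices) of a graph. -/
def leaves {V : Type} (T : SimpleGraph V) : Set V :=
  {v | deg T v = 1}

/-- A cubic tree: every node is a leaf (degree 1) or internal of degree 3. -/
def IsCubic {V : Type} (T : SimpleGraph V) : Prop :=
  ∀ v, deg T v = 1 ∨ deg T v = 3

/-- `compAway T v u` : the vertex set of the component of `T` minus the edge `{v,u}`
containing `u` (hence not containing `v`); this is `T_{e,v}` for `e = {u,v}`. -/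
def compAway {V : Type} (T : SimpleGraph V) (v u : V) : Set V :=
  {w | (T.deleteEdges {s(v, u)}).Reachable u w}

/-- `nAway T v u` : the number of leaves of `T` lying in the component of `T - {v,u}`
not containing `v`; this is `n_{e,v}` for `e = {u,v}`. -/
noncomputable def nAway {V : Type} (T : SimpleGraph V) (v u : V) : ℕ :=
  (compAway T v u ∩ leaves T).ncard

/-- Neighbours of a vertex, as a `Finset`. -/
noncomputable def nbrFinset {V : Type} [Fintype V] (T : SimpleGraph V) (v : V) : Finset V :=
  (T.neighborSet v).toFinite.toFinset

/-- `n_{e_3(v),v}`: the largest number of leaves in a component of `T - e` over the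
edges `e` incident to `v`. -/
noncomputable def n3max {V : Type} (T : SimpleGraph V) (v : V) : ℕ :=
  sSup ((fun u => nAway T v u) '' T.neighborSet v)

/-- `n_{e_1(v),v}`: the smallest number of leaves in a component of `T - e` over the
edges `e` incident to `v`. -/
noncomputable def n1min {V : Type} (T : SimpleGraph V) (v : V) : ℕ :=
  sInf ((fun u => nAway T v u) '' T.neighborSet v)

/-- `n_{e_2(v),v}`: the middle of the three leaf counts at an internal node `v` of a
cubic tree (the total of the three leaf counts minus the largest and the smallest). -/
noncomputable def n2mid {V : Type} [Fintype V] (T : SimpleGraph V) (v : V) : ℕ :=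
  (∑ u ∈ nbrFinset T v, nAway T v u) - n3max T v - n1min T v

/-! Removing an edge of a tree splits its leaves between the two sides, and at an internal node
the three branches partition the leaves, so `n₁ + n₂ + n₃ = n`. Among the oriented edges `a → b`
whose far side holds at least `n/2` leaves, take one minimising that number `k`. Each of the two
further branches at `b` has at most `n - k` leaves (by minimality applied to it or to its
reversal), and together they hold `k` leaves, so `k ≤ 2n/3` and `a ∈ W`. For a maximiser `v*` of
`n₃` on `W`, `2n₂ ≥ n - n₃ ≥ n/3`, strictly since `3 ∤ 2n`. If `n₂ ≥ n/3`, the neighbour across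
`e₂(v*)` would lie in `W` with largest branch `n - n₂ = n₁ + n₃ > n₃`, contradicting maximality. -/

open SimpleGraph Finset

section Branches

variable {V : Type} {T : SimpleGraph V} {v u w : V}

lemma mem_compAway_self : u ∈ compAway T v u :=
  Reachable.refl u

lemma mem_compAway_of_walk (p : T.Walk u w) (hv : v ∉ p.support) : w ∈ compAway T v u :=
  reachable_deleteEdges_iff_exists_walk.mpr
    ⟨p, fun h => hv (p.fst_mem_support_of_mem_edges h)⟩

lemma compAway_eq_singleton_of_mem_leaves (h : T.Adj v u) (hu : u ∈ leaves T) :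
    compAway T v u = {u} := by
  obtain ⟨x, hx⟩ := Set.ncard_eq_one.mp hu
  have hnbr : ∀ y, T.Adj u y → y = v := fun y hy => by
    have hv : v ∈ T.neighborSet u := h.symm
    have hy : y ∈ T.neighborSet u := hy
    rw [hx, Set.mem_singleton_iff] at hv hy
    rw [hv, hy]
  refine Set.eq_singleton_iff_unique_mem.mpr ⟨mem_compAway_self, fun w hw => ?_⟩
  obtain ⟨p⟩ := hw
  cases p with
  | nil => rfl
  | cons hadj _ =>
    rw [deleteEdges_adj] at hadj
    obtain ⟨hadj, hne⟩ := hadj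
    rw [hnbr _ hadj, Set.mem_singleton_iff, Sym2.eq_swap] at hne
    exact absurd rfl hne

lemma nAway_eq_one_of_mem_leaves (h : T.Adj v u) (hu : u ∈ leaves T) : nAway T v u = 1 := by
  rw [nAway, compAway_eq_singleton_of_mem_leaves h hu, Set.inter_eq_left.mpr
    (Set.singleton_subset_iff.mpr hu), Set.ncard_singleton]

section Acyclic

variable (hT : T.IsAcyclic)
include hT

lemma not_reachable_deleteEdges (h : T.Adj v u) :
    ¬ (T.deleteEdges {s(v, u)}).Reachable v u :=
  isBridge_iff.mp (isAcyclic_iff_forall_adj_isBridge.mp hT h)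

lemma not_mem_compAway (h : T.Adj v u) : v ∉ compAway T v u :=
  fun hv => not_reachable_deleteEdges hT h hv.symm

lemma exists_walk_of_mem_compAway (h : T.Adj v u) (hw : w ∈ compAway T v u) :
    ∃ p : T.Walk u w, v ∉ p.support := by
  classical
  obtain ⟨q⟩ := hw
  by_cases hv : v ∈ q.support
  · exact absurd ⟨q.takeUntil v hv⟩ (not_reachable_deleteEdges hT h ∘ Reachable.symm)
  · refine ⟨q.transfer T fun e he => ?_, by rwa [Walk.support_transfer]⟩
    exact edgeSet_mono (deleteEdges_le _) (q.edges_subset_edgeSet he)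

lemma disjoint_compAway_swap (h : T.Adj v u) : Disjoint (compAway T v u) (compAway T u v) := by
  refine Set.disjoint_left.mpr fun w hvu huv => not_reachable_deleteEdges hT h ?_
  have huv : (T.deleteEdges {s(v, u)}).Reachable v w := by rwa [Sym2.eq_swap]
  exact huv.trans hvu.symm

lemma compAway_subset_compAway {u₁ u₂ : V} (h₁ : T.Adj v u₁) (hne : u₁ ≠ u₂) :
    compAway T v u₁ ⊆ compAway T u₂ v := by
  intro w hw
  obtain ⟨p, hp⟩ := exists_walk_of_mem_compAway hT h₁ hw
  refine reachable_deleteEdges_iff_exists_walk.mpr ⟨Walk.cons h₁ p, ?_⟩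
  rw [Walk.edges_cons, List.mem_cons, not_or]
  exact ⟨by simp [hne.symm, h₁.ne], fun he => hp (p.snd_mem_support_of_mem_edges he)⟩

lemma disjoint_compAway {u₁ u₂ : V} (h₁ : T.Adj v u₁) (h₂ : T.Adj v u₂) (hne : u₁ ≠ u₂) :
    Disjoint (compAway T v u₁) (compAway T v u₂) :=
  (disjoint_compAway_swap hT h₂).symm.mono_left (compAway_subset_compAway hT h₁ hne)

-- Descend into ever smaller branches until the current vertex is a leaf.
lemma exists_mem_leaves_mem_compAway [Finite V] (h : T.Adj v u) :
    ∃ w ∈ compAway T v u, w ∈ leaves T := by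
  induction hn : (compAway T v u).ncard using Nat.strong_induction_on generalizing v u with
  | _ n ih =>
  by_cases hu : u ∈ leaves T
  · exact ⟨u, mem_compAway_self, hu⟩
  obtain ⟨x, hux, hxv⟩ : ∃ x, T.Adj u x ∧ x ≠ v := by
    by_contra! hc
    refine hu ((Set.ncard_eq_one.mpr ⟨v, ?_⟩ : deg T u = 1))
    exact Set.eq_singleton_iff_unique_mem.mpr ⟨h.symm, hc⟩
  have hsub : compAway T u x ⊂ compAway T v u :=
    ⟨compAway_subset_compAway hT hux hxv,
      fun hs => not_mem_compAway hT hux (hs mem_compAway_self)⟩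
  obtain ⟨w, hw, hwl⟩ := ih _ (hn ▸ Set.ncard_lt_ncard hsub) hux rfl
  exact ⟨w, hsub.1 hw, hwl⟩

lemma nAway_pos [Finite V] (h : T.Adj v u) : 0 < nAway T v u := by
  obtain ⟨w, hw, hwl⟩ := exists_mem_leaves_mem_compAway hT h
  exact (Set.ncard_pos).mpr ⟨w, hw, hwl⟩

end Acyclic

section Connected

variable (hT : T.Connected)
include hT

lemma mem_compAway_or_mem_compAway_swap (h : T.Adj v u) (w : V) :
    w ∈ compAway T v u ∨ w ∈ compAway T u v := by
  obtain ⟨p, hp⟩ := (hT.preconnected u w).exists_isPath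
  cases p with
  | nil => exact Or.inl mem_compAway_self
  | @cons _ x _ hux q =>
    have hu := ((Walk.cons_isPath_iff hux q).mp hp).2
    by_cases hxv : x = v
    · subst hxv
      exact Or.inr (mem_compAway_of_walk q hu)
    · refine Or.inl (reachable_deleteEdges_iff_exists_walk.mpr ⟨Walk.cons hux q, ?_⟩)
      rw [Walk.edges_cons, List.mem_cons, not_or]
      exact ⟨by simp [h.ne, Ne.symm hxv], fun he => hu (q.snd_mem_support_of_mem_edges he)⟩

lemma exists_adj_mem_compAway (hw : w ≠ v) : ∃ u, T.Adj v u ∧ w ∈ compAway T v u := by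
  obtain ⟨p, hp⟩ := (hT.preconnected v w).exists_isPath
  cases p with
  | nil => exact absurd rfl hw
  | cons hvu q => exact ⟨_, hvu, mem_compAway_of_walk q ((Walk.cons_isPath_iff hvu q).mp hp).2⟩

end Connected

end Branches

section Counting

variable {V : Type} {T : SimpleGraph V} {v u : V}

lemma nAway_add_nAway_swap [Finite V] (hT : T.IsTree) (h : T.Adj v u) :
    nAway T v u + nAway T u v = (leaves T).ncard := by
  have hcover : compAway T v u ∪ compAway T u v = Set.univ :=
    Set.eq_univ_of_forall (mem_compAway_or_mem_compAway_swap hT.connected h)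
  rw [nAway, nAway, ← Set.ncard_union_eq ((disjoint_compAway_swap hT.isAcyclic h).mono
    Set.inter_subset_left Set.inter_subset_left), ← Set.union_inter_distrib_right, hcover,
    Set.univ_inter]

lemma n3max_eq_nAway_of_le (h : T.Adj v u) (hle : ∀ w, T.Adj v w → nAway T v w ≤ nAway T v u) :
    n3max T v = nAway T v u :=
  IsGreatest.csSup_eq ⟨⟨u, h, rfl⟩, by rintro _ ⟨w, hw, rfl⟩; exact hle w hw⟩

lemma n1min_eq_nAway_of_le (h : T.Adj v u) (hle : ∀ w, T.Adj v w → nAway T v u ≤ nAway T v w) :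
    n1min T v = nAway T v u :=
  IsLeast.csInf_eq ⟨⟨u, h, rfl⟩, by rintro _ ⟨w, hw, rfl⟩; exact hle w hw⟩

lemma n3max_eq_nAway_of_heavy [Finite V] (hT : T.IsTree) (h : T.Adj v u)
    (hheavy : (leaves T).ncard ≤ 2 * nAway T v u) : n3max T v = nAway T v u := by
  refine n3max_eq_nAway_of_le h fun w hw => ?_
  rcases eq_or_ne w u with rfl | hwu
  · exact le_rfl
  have hle : nAway T v w ≤ nAway T u v := Set.ncard_le_ncard
    (Set.inter_subset_inter_left _ (compAway_subset_compAway hT.isAcyclic hw hwu))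
  have := nAway_add_nAway_swap hT h
  omega

variable [Fintype V]

lemma mem_nbrFinset : u ∈ nbrFinset T v ↔ T.Adj v u := by
  simp [nbrFinset]

lemma card_nbrFinset : (nbrFinset T v).card = deg T v :=
  (Set.ncard_eq_toFinset_card _ _).symm

lemma sum_nAway_eq (hT : T.IsTree) (hv : v ∉ leaves T) :
    ∑ u ∈ nbrFinset T v, nAway T v u = (leaves T).ncard := by
  have hunion : leaves T = ⋃ u ∈ T.neighborSet v, compAway T v u ∩ leaves T := by
    ext w
    simp only [Set.mem_iUnion, Set.mem_inter_iff, mem_neighborSet, exists_prop]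
    refine ⟨fun hw => ?_, fun ⟨_, _, _, hw⟩ => hw⟩
    obtain ⟨u, hu, hwu⟩ := exists_adj_mem_compAway hT.connected (ne_of_mem_of_not_mem hw hv)
    exact ⟨u, hu, hwu, hw⟩
  have hdisj : (T.neighborSet v).PairwiseDisjoint fun u => compAway T v u ∩ leaves T :=
    fun u₁ h₁ u₂ h₂ hne => (disjoint_compAway hT.isAcyclic h₁ h₂ hne).mono
      Set.inter_subset_left Set.inter_subset_left
  rw [hunion, (Set.toFinite _).ncard_biUnion (fun _ _ => Set.toFinite _) hdisj, nbrFinset,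
    ← finsum_mem_coe_finset, Set.Finite.coe_toFinset]
  rfl

lemma Finset.exists_sorted_of_card_eq_three {α β : Type*} [DecidableEq α] [LinearOrder β]
    {s : Finset α}
    (hs : s.card = 3) (f : α → β) :
    ∃ a b c : α, s = {a, b, c} ∧ a ≠ b ∧ a ≠ c ∧ b ≠ c ∧ f a ≤ f b ∧ f b ≤ f c := by
  obtain ⟨c, hc, hmax⟩ := s.exists_max_image f (card_pos.mp (by omega))
  obtain ⟨a, b, hab, hrest⟩ := card_eq_two.mp (show (s.erase c).card = 2 by
    rw [card_erase_of_mem hc, hs])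
  have ha : a ∈ s.erase c := hrest ▸ mem_insert_self a {b}
  have hb : b ∈ s.erase c := hrest ▸ mem_insert_of_mem (mem_singleton_self b)
  have hs : s = {a, b, c} := by
    rw [← insert_erase hc, hrest, insert_comm, pair_comm c b]
  rcases le_total (f a) (f b) with h | h
  · exact ⟨a, b, c, hs, hab, ne_of_mem_erase ha, ne_of_mem_erase hb, h,
      hmax b (mem_of_mem_erase hb)⟩
  · exact ⟨b, a, c, by rw [hs, insert_comm], hab.symm, ne_of_mem_erase hb, ne_of_mem_erase ha,
      h, hmax a (mem_of_mem_erase ha)⟩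

lemma branch_profile (hT : T.IsTree) (hdeg : deg T v = 3) :
    0 < n1min T v ∧ n1min T v ≤ n2mid T v ∧ n2mid T v ≤ n3max T v ∧
      n1min T v + n2mid T v + n3max T v = (leaves T).ncard ∧
      ∃ u, T.Adj v u ∧ nAway T v u = n2mid T v := by
  classical
  obtain ⟨u₁, u₂, u₃, hN, h₁₂, h₁₃, h₂₃, hle₁₂, hle₂₃⟩ :=
    Finset.exists_sorted_of_card_eq_three (card_nbrFinset.trans hdeg) (nAway T v)
  have hmem : ∀ w, T.Adj v w ↔ w = u₁ ∨ w = u₂ ∨ w = u₃ := fun w => by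
    rw [← mem_nbrFinset, hN]
    simp
  have hsum : ∑ u ∈ nbrFinset T v, nAway T v u = nAway T v u₁ + nAway T v u₂ + nAway T v u₃ := by
    rw [hN, sum_insert (by simp [h₁₂, h₁₃]), sum_pair h₂₃, add_assoc]
  have h₁ : n1min T v = nAway T v u₁ := n1min_eq_nAway_of_le ((hmem u₁).mpr (by simp))
    fun w hw => by rcases (hmem w).mp hw with rfl | rfl | rfl <;> omega
  have h₃ : n3max T v = nAway T v u₃ := n3max_eq_nAway_of_le ((hmem u₃).mpr (by simp))
    fun w hw => by rcases (hmem w).mp hw with rfl | rfl | rfl <;> omega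
  have h₂ : n2mid T v = nAway T v u₂ := by
    rw [n2mid, hsum, h₁, h₃]
    omega
  have hleaves := sum_nAway_eq hT (show deg T v ≠ 1 by omega)
  have hpos := nAway_pos hT.isAcyclic ((hmem u₁).mpr (by simp))
  exact ⟨by omega, by omega, by omega, by omega, u₂, (hmem u₂).mpr (by simp), h₂.symm⟩

end Counting

-- The set `W`, with the bounds `n/2 ≤ n₃ ≤ 2n/3` cleared of denominators.
def balancedNodes {V : Type} (T : SimpleGraph V) (n : ℕ) : Set V :=
  {v | deg T v = 3 ∧ n ≤ 2 * n3max T v ∧ 3 * n3max T v ≤ 2 * n}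

section CubicTree

variable {V : Type} [Fintype V] {T : SimpleGraph V} (hT : T.IsTree) (hcubic : IsCubic T)
include hT hcubic

lemma three_mul_nAway_le_of_minimal {a b : V} (hab : T.Adj a b)
    (hheavy : (leaves T).ncard ≤ 2 * nAway T a b)
    (hmin : ∀ x y, T.Adj x y → (leaves T).ncard ≤ 2 * nAway T x y →
      nAway T a b ≤ nAway T x y) :
    3 * nAway T a b ≤ 2 * (leaves T).ncard := by
  classical
  have hba := nAway_add_nAway_swap hT hab.symm
  have hpos := nAway_pos hT.isAcyclic hab.symm
  rcases hcubic b with hb | hb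
  · rw [nAway_eq_one_of_mem_leaves hab hb]
    omega
  have hlight : ∀ c, T.Adj b c → nAway T b c < nAway T a b →
      nAway T b c + nAway T a b ≤ (leaves T).ncard := fun c hc hlt => by
    have hbc := nAway_add_nAway_swap hT hc
    rcases le_or_gt (leaves T).ncard (2 * nAway T b c) with h | h
    · exact absurd (hmin b c hc h) (not_le.mpr hlt)
    · have := hmin c b hc.symm (by omega)
      omega
  have ha : a ∈ nbrFinset T b := mem_nbrFinset.mpr hab.symm
  obtain ⟨c, d, hcd, hN⟩ := card_eq_two.mp (show ((nbrFinset T b).erase a).card = 2 by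
    rw [card_erase_of_mem ha, card_nbrFinset, hb])
  have hcd_mem : c ∈ (nbrFinset T b).erase a ∧ d ∈ (nbrFinset T b).erase a := by
    simp [hN]
  have hc : T.Adj b c := mem_nbrFinset.mp (mem_of_mem_erase hcd_mem.1)
  have hd : T.Adj b d := mem_nbrFinset.mp (mem_of_mem_erase hcd_mem.2)
  have hsum := sum_nAway_eq hT (show deg T b ≠ 1 by omega)
  rw [← add_sum_erase _ _ ha, hN, sum_pair hcd] at hsum
  have := hlight c hc (by have := nAway_pos hT.isAcyclic hd; omega)
  have := hlight d hd (by have := nAway_pos hT.isAcyclic hc; omega)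
  omega

lemma balancedNodes_nonempty (hn : 4 ≤ (leaves T).ncard) :
    (balancedNodes T (leaves T).ncard).Nonempty := by
  obtain ⟨w₀, hw₀⟩ : (leaves T).Nonempty := Set.nonempty_of_ncard_ne_zero (by omega)
  obtain ⟨b₀, hb₀⟩ : (T.neighborSet w₀).Nonempty :=
    Set.nonempty_of_ncard_ne_zero (show deg T w₀ ≠ 0 by rw [hw₀]; omega)
  obtain ⟨⟨a, b⟩, ⟨hab, hheavy⟩, hmin⟩ := Set.exists_min_image
    {e : V × V | T.Adj e.1 e.2 ∧ (leaves T).ncard ≤ 2 * nAway T e.1 e.2}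
    (fun e => nAway T e.1 e.2) (Set.toFinite _) (by
      have := nAway_add_nAway_swap hT hb₀
      rcases le_total (leaves T).ncard (2 * nAway T w₀ b₀) with h | h
      · exact ⟨(w₀, b₀), hb₀, h⟩
      · exact ⟨(b₀, w₀), hb₀.symm, show _ ≤ 2 * nAway T b₀ w₀ by omega⟩)
  have h3 := three_mul_nAway_le_of_minimal hT hcubic hab hheavy
    fun x y hxy h => hmin (x, y) ⟨hxy, h⟩
  have ha : deg T a = 3 := (hcubic a).resolve_left fun ha => by
    have := nAway_add_nAway_swap hT hab
    rw [nAway_eq_one_of_mem_leaves hab.symm ha] at this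
    omega
  exact ⟨a, ha, by rw [n3max_eq_nAway_of_heavy hT hab hheavy]; exact ⟨hheavy, h3⟩⟩

omit hcubic in
lemma lt_six_mul_n2mid {v : V} (hdeg : deg T v = 3)
    (h : 3 * n3max T v < 2 * (leaves T).ncard) : (leaves T).ncard < 6 * n2mid T v := by
  obtain ⟨-, h₁₂, -, hsum, -⟩ := branch_profile hT hdeg
  omega

lemma three_mul_n2mid_lt (hn : 4 ≤ (leaves T).ncard) {v : V}
    (hv : v ∈ balancedNodes T (leaves T).ncard)
    (hmax : ∀ w ∈ balancedNodes T (leaves T).ncard, n3max T w ≤ n3max T v) :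
    3 * n2mid T v < (leaves T).ncard := by
  obtain ⟨hpos, -, h₂₃, hsum, u, hu, hu₂⟩ := branch_profile hT hv.1
  by_contra! hge
  have hvu := nAway_add_nAway_swap hT hu
  have hdeg : deg T u = 3 := (hcubic u).resolve_left fun hleaf => by
    rw [nAway_eq_one_of_mem_leaves hu hleaf] at hu₂
    omega
  have hheavy : (leaves T).ncard ≤ 2 * nAway T u v := by omega
  have h3 := n3max_eq_nAway_of_heavy hT hu.symm hheavy
  have := hmax u ⟨hdeg, by omega, by omega⟩
  omega

end CubicTree

/-- Let `T` be a cubic tree with `n = 2^m` leaves, `m ≥ 3`. The set `W`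
of internal nodes `v` with `n/2 ≤ n_{e_3(v),v} ≤ 2n/3` is nonempty, and any `v* ∈ W`
maximizing `n_{e_3(v),v}` over `W` satisfies `n/6 < n_{e_2(v*),v*} < n/3`. -/
theorem stmt9 {V : Type} [Fintype V] (T : SimpleGraph V) (m : ℕ) (hm : 3 ≤ m)
    (hT : T.IsTree) (hcubic : IsCubic T) (hleaves : (leaves T).ncard = 2 ^ m) :
    {v : V | deg T v = 3 ∧ 2 ^ m ≤ 2 * n3max T v ∧ 3 * n3max T v ≤ 2 * 2 ^ m}.Nonempty ∧
    ∀ v : V,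
      (deg T v = 3 ∧ 2 ^ m ≤ 2 * n3max T v ∧ 3 * n3max T v ≤ 2 * 2 ^ m) →
      (∀ w : V, (deg T w = 3 ∧ 2 ^ m ≤ 2 * n3max T w ∧ 3 * n3max T w ≤ 2 * 2 ^ m) →
        n3max T w ≤ n3max T v) →
      2 ^ m < 6 * n2mid T v ∧ 3 * n2mid T v < 2 ^ m := by
  have hn : 4 ≤ (leaves T).ncard := hleaves ▸ Nat.pow_le_pow_right two_pos (by omega : 2 ≤ m)
  have hndvd : ∀ k, 3 * k ≠ 2 * (leaves T).ncard := fun k hk => by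
    have h3 : 3 ∣ 2 ^ (m + 1) := ⟨k, by rw [pow_succ]; omega⟩
    have := Nat.Prime.dvd_of_dvd_pow Nat.prime_three h3
    omega
  rw [← hleaves]
  exact ⟨balancedNodes_nonempty hT hcubic hn, fun v hv hmax =>
    ⟨lt_six_mul_n2mid hT hv.1 (lt_of_le_of_ne hv.2.2 (hndvd _)),
      three_mul_n2mid_lt hT hcubic hn hv hmax⟩⟩
end

section
/- Let m ≥ 2 and r ≤ m with m < 2r. Then U_{α^(m)}(RM(r,m)) = Σ_{i=0}^{(m−1)/2} k(r−1−i, m−1−2i) if m is odd and Σ_{i=0}^{(m−2)/2} k(r−1−i, m−1−2i) if m is even; and U_{β^(m)}(RM(r,m)) = Σ_{i=1}^{(m−1)/2} k(r−1−i, m−2i) if m is odd and Σ_{i=1}^{m/2} k(r−1−i, m−2i) if m is even. -/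
open Module

/-- Support of a subcode. -/
def chi {F : Type} [Field F] {n : ℕ} (D : Submodule F (Fin n → F)) : Set (Fin n) :=
  {i | ∃ c ∈ D, c i ≠ 0}

/-- `Ucap C s`: maximal dimension of a subcode of `C` whose support has size at most `s`. -/
noncomputable def Ucap {F : Type} [Field F] {n : ℕ}
    (C : Submodule F (Fin n → F)) (s : ℕ) : ℕ :=
  sSup {d : ℕ | ∃ D : Submodule F (Fin n → F), D ≤ C ∧ (chi D).ncard ≤ s ∧ finrank F ↥D = d}

/-- The binary Reed–Muller code `RM(r,m)`: the evaluation vectors, at the points of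
`{0,1}^m` listed in the standard bit order, of the `m`-variable polynomials over `F₂`
of total degree at most `r`. -/
def RMcode (r m : ℕ) : Submodule (ZMod 2) (Fin (2 ^ m) → ZMod 2) :=
  Submodule.span (ZMod 2)
    {w | ∃ f : MvPolynomial (Fin m) (ZMod 2), f.totalDegree ≤ r ∧
      w = fun i => MvPolynomial.eval (fun j : Fin m => if Nat.testBit i.val j.val then 1 else 0) f}

/-- `α(m)`: the largest integer not exceeding `(2/3)·2^m`. -/
def alph (m : ℕ) : ℕ := 2 ^ (m + 1) / 3

/-- `β(m)`: the largest integer not exceeding `(1/3)·2^m`. -/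
def bet (m : ℕ) : ℕ := 2 ^ m / 3


/-!
Index the monomial `x^S = ∏_{j ∈ S} x_j` by the number `⌊S⌋ = ∑_{j ∈ S} 2^j`. Its evaluation
vector is supported on the coordinates whose binary digits contain `S`, all of which are `≥ ⌊S⌋`.
So if `N(r, m, s)` counts the monomials of degree `< r` with `⌊S⌋ ≥ 2^m - s`, these span a subcode
of `RM(r - 1, m)` supported on the top `s` coordinates, and `U_s(RM(r - 1, m)) ≥ N(r, m, s)`.

For the converse, induct on `m` through the Plotkin decomposition
`RM(r, m + 1) = {(u | u + v) : u ∈ RM(r, m), v ∈ RM(r - 1, m)}` along the last variable. If a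
subcode `D` of `RM(r, m + 1)` has `a` support coordinates in the first half and `b` in the second,
projecting `D` to one half and its kernel to the other gives `dim D ≤ N(r + 1, m, a) + N(r, m, b)`,
and the same with `a` and `b` exchanged. For `b ≤ a ≤ 2^m` the counting inequality
`N(r + 1, m, b) + N(r, m, a) ≤ N(r + 1, m + 1, a + b)` closes the induction; it follows from the
recursion `N(r + 1, m + 1, s) = N(r, m, s) + N(r + 1, m, s - 2^m)` by an induction on `m` that
carries two companion inequalities along.

Finally `α(m + 1) = 2^m + β(m)` and `β(m + 1) = α(m)` turn the recursion into
`N(r + 1, m + 1, β(m + 1)) = N(r, m, α(m))` and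
`N(r + 2, m + 2, α(m + 2)) = k(r, m + 1) + N(r + 1, m, α(m))`, which unfold to the stated sums.
-/

open Finset

section Counting

variable {m : ℕ}

def twoPowSum (S : Finset (Fin m)) : ℕ := ∑ j ∈ S, 2 ^ (j : ℕ)

lemma twoPowSum_eq_sum_map (S : Finset (Fin m)) :
    twoPowSum S = ∑ j ∈ S.map Fin.valEmbedding, 2 ^ j := by
  simp [twoPowSum]

lemma twoPowSum_lt (S : Finset (Fin m)) : twoPowSum S < 2 ^ m := by
  rw [twoPowSum_eq_sum_map]
  exact Nat.geomSum_lt le_rfl (by simp)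

lemma testBit_twoPowSum (S : Finset (Fin m)) (j : Fin m) :
    (twoPowSum S).testBit j ↔ j ∈ S := by
  rw [← Nat.mem_bitIndices, ← List.mem_toFinset, twoPowSum_eq_sum_map,
    toFinset_bitIndices_sum_two_pow]
  simp [Fin.val_inj]

lemma twoPowSum_le_of_testBit {S : Finset (Fin m)} {i : ℕ} (h : ∀ j ∈ S, i.testBit j) :
    twoPowSum S ≤ i := by
  conv_rhs => rw [← sum_toFinset_bitIndices_two_pow i]
  rw [twoPowSum_eq_sum_map]
  refine sum_le_sum_of_subset fun k hk => ?_
  obtain ⟨j, hj, rfl⟩ := mem_map.1 hk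
  simpa using h j hj

lemma twoPowSum_map_castSucc (T : Finset (Fin m)) :
    twoPowSum (T.map Fin.castSuccEmb) = twoPowSum T := by
  simp [twoPowSum]

lemma twoPowSum_insert_last (T : Finset (Fin m)) :
    twoPowSum (insert (Fin.last m) (T.map Fin.castSuccEmb)) = 2 ^ m + twoPowSum T := by
  rw [twoPowSum, sum_insert (by simp), ← twoPowSum, twoPowSum_map_castSucc, Fin.val_last]

lemma sum_finset_fin_succ {M : Type*} [AddCommMonoid M] (f : Finset (Fin (m + 1)) → M) :
    ∑ S, f S = ∑ T : Finset (Fin m), f (T.map Fin.castSuccEmb)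
      + ∑ T : Finset (Fin m), f (insert (Fin.last m) (T.map Fin.castSuccEmb)) := by
  rw [← powerset_univ, Fin.univ_castSuccEmb, cons_eq_insert, sum_powerset_insert (by simp)]
  simp only [map_eq_image, powerset_image, powerset_univ,
    sum_image (image_injective Fin.castSuccEmb.injective).injOn]

/-- The monomials `x^S` of degree `< r` whose evaluation vectors live on the top `s` coordinates.
The strict bound makes `topCount_succ_succ` hold for every `r`, with `r = 0` giving nothing. -/
def topMonomials (r m s : ℕ) : Finset (Finset (Fin m)) :=
  {S | #S < r ∧ 2 ^ m ≤ twoPowSum S + s}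

def topCount (r m s : ℕ) : ℕ := #(topMonomials r m s)

variable {r s t : ℕ}

@[simp] lemma topCount_zero_left : topCount 0 m s = 0 := by
  simp [topCount, topMonomials]

lemma topCount_of_eq_zero (h : s = 0) : topCount r m s = 0 := by
  simpa [h, topCount, topMonomials] using fun S _ => twoPowSum_lt S

lemma topCount_of_le (h : 2 ^ m ≤ s) : topCount r m s = #{S : Finset (Fin m) | #S < r} := by
  simp only [topCount, topMonomials]
  congr 1
  exact filter_congr fun S _ => by omega

lemma card_card_lt_succ_eq_kRM : #{S : Finset (Fin m) | #S < r + 1} = kRM r m := by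
  have := sum_card_fiberwise_eq_card_filter (univ : Finset (Finset (Fin m))) (range (r + 1)) card
  simp only [mem_range] at this
  rw [← this, kRM]
  simp [card_powersetCard]

lemma topCount_mono_right (h : s ≤ t) : topCount r m s ≤ topCount r m t :=
  card_le_card <| monotone_filter_right _ fun S _ hS => ⟨hS.1, by omega⟩

lemma topCount_mono_left {r' : ℕ} (h : r ≤ r') : topCount r m s ≤ topCount r' m s :=
  card_le_card <| monotone_filter_right _ fun S _ hS => ⟨by omega, hS.2⟩

lemma topCount_succ_left : topCount (r + 1) m s =
    topCount r m s + #{S : Finset (Fin m) | #S = r ∧ 2 ^ m ≤ twoPowSum S + s} := by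
  simp only [topCount, topMonomials, card_filter, ← sum_add_distrib]
  refine sum_congr rfl fun S _ => ?_
  split_ifs <;> omega

lemma topCount_succ_add_le (h : s ≤ t) :
    topCount (r + 1) m s + topCount r m t ≤ topCount r m s + topCount (r + 1) m t := by
  have : #{S : Finset (Fin m) | #S = r ∧ 2 ^ m ≤ twoPowSum S + s}
      ≤ #{S : Finset (Fin m) | #S = r ∧ 2 ^ m ≤ twoPowSum S + t} :=
    card_le_card <| monotone_filter_right _ fun S _ hS => ⟨hS.1, by omega⟩
  rw [topCount_succ_left, topCount_succ_left]
  omega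

lemma topCount_succ_succ :
    topCount (r + 1) (m + 1) s = topCount r m s + topCount (r + 1) m (s - 2 ^ m) := by
  simp only [topCount, topMonomials, card_filter]
  rw [sum_finset_fin_succ, add_comm]
  congr 1 <;> refine sum_congr rfl fun T _ => ?_
  · have := twoPowSum_lt T
    rw [card_insert_of_notMem (by simp), card_map, twoPowSum_insert_last, pow_succ]
    split_ifs <;> omega
  · have := twoPowSum_lt T
    rw [card_map, twoPowSum_map_castSucc, pow_succ]
    split_ifs <;> omega

lemma topCount_fin_zero : topCount r 0 s = if 0 < r ∧ 0 < s then 1 else 0 := by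
  rw [topCount, topMonomials, show (univ : Finset (Finset (Fin 0))) = {∅} from rfl,
    filter_singleton]
  split_ifs <;> simp_all [twoPowSum]

end Counting

section Overflow

variable (m : ℕ)

/-! In these three statements `z` and `w` stand for `x + y` and `x + y - 2^m`, so that instances
can be taken with whatever expressions occur in the induction step. -/

def OverflowIneqSame : Prop := ∀ r x y z w, x ≤ 2 ^ m → y ≤ 2 ^ m → z = x + y →
  w = z - 2 ^ m → topCount r m x + topCount r m y ≤ topCount r m z + topCount r m w

def OverflowIneqKeep : Prop := ∀ r x y z w, x ≤ 2 ^ m → y ≤ 2 ^ m → z = x + y →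
  w = z - 2 ^ m → topCount (r + 1) m x + topCount r m y ≤ topCount (r + 1) m z + topCount r m w

def OverflowIneqSwap : Prop := ∀ r x y z w, x ≤ y → y ≤ 2 ^ m → z = x + y →
  w = z - 2 ^ m → topCount (r + 1) m x + topCount r m y ≤ topCount r m z + topCount (r + 1) m w

variable {m}

lemma overflowIneqs_zero : OverflowIneqSame 0 ∧ OverflowIneqKeep 0 ∧ OverflowIneqSwap 0 := by
  refine ⟨?_, ?_, ?_⟩ <;>
  · intro r x y z w hx hy hz hw
    simp only [topCount_fin_zero, pow_zero] at *
    split_ifs <;> omega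

lemma OverflowIneqSame.succ (hS : OverflowIneqSame m) (hK : OverflowIneqKeep m) :
    OverflowIneqSame (m + 1) := by
  intro r x y z w hx hy hz hw
  wlog hxy : x ≤ y generalizing x y
  · have := this y x hy hx (by omega) (by omega)
    omega
  have hN : 2 ^ (m + 1) = 2 * 2 ^ m := pow_succ' 2 m
  rcases r with _ | r
  · simp
  simp only [topCount_succ_succ]
  rcases le_or_gt y (2 ^ m) with hyN | hyN
  · have h1 := hS r x y z (z - 2 ^ m) (by omega) hyN hz rfl
    have h2 := topCount_mono_left (m := m) (by omega : r ≤ r + 1) (s := z - 2 ^ m)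
    simp (disch := omega) only [topCount_of_eq_zero] at h1 h2 ⊢
    omega
  rcases le_or_gt x (2 ^ m) with hxN | hxN
  · have h1 := hK r (y - 2 ^ m) x (z - 2 ^ m) w (by omega) hxN (by omega) (by omega)
    simp (disch := omega) only [topCount_of_eq_zero, topCount_of_le] at h1 ⊢
    omega
  · have h1 := hS (r + 1) (x - 2 ^ m) (y - 2 ^ m) w (w - 2 ^ m)
      (by omega) (by omega) (by omega) rfl
    have h2 := topCount_succ_add_le (r := r) (m := m) (s := w) (t := z - 2 ^ m) (by omega)
    simp (disch := omega) only [topCount_of_le] at h1 h2 ⊢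
    omega

lemma OverflowIneqKeep.succ (hS : OverflowIneqSame m) (hK : OverflowIneqKeep m) :
    OverflowIneqKeep (m + 1) := by
  intro r x y z w hx hy hz hw
  have hN : 2 ^ (m + 1) = 2 * 2 ^ m := pow_succ' 2 m
  rcases r with _ | r
  · simpa using topCount_mono_right (by omega)
  simp only [topCount_succ_succ]
  rcases le_or_gt x (2 ^ m) with hxN | hxN <;> rcases le_or_gt y (2 ^ m) with hyN | hyN
  · have h1 := hK r x y z (z - 2 ^ m) hxN hyN hz rfl
    have h2 := topCount_mono_left (m := m) (by omega : r ≤ r + 1 + 1) (s := z - 2 ^ m)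
    simp (disch := omega) only [topCount_of_eq_zero] at h1 h2 ⊢
    omega
  · have h1 := hS (r + 1) x (y - 2 ^ m) (z - 2 ^ m) w hxN (by omega) (by omega) (by omega)
    have h2 := topCount_mono_left (m := m) (by omega : r + 1 ≤ r + 1 + 1) (s := z - 2 ^ m)
    have h3 := topCount_succ_add_le (r := r) (m := m) (s := w) (t := z) (by omega)
    simp (disch := omega) only [topCount_of_eq_zero, topCount_of_le] at h1 h2 h3 ⊢
    omega
  · have h1 := hK (r + 1) (x - 2 ^ m) y (z - 2 ^ m) w (by omega) hyN (by omega) (by omega)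
    have h2 := topCount_succ_add_le (r := r) (m := m) (s := w) (t := y) (by omega)
    simp (disch := omega) only [topCount_of_eq_zero, topCount_of_le] at h1 h2 ⊢
    omega
  · have h1 := hK (r + 1) (x - 2 ^ m) (y - 2 ^ m) w (w - 2 ^ m)
      (by omega) (by omega) (by omega) rfl
    have h2 := topCount_succ_add_le (r := r + 1) (m := m) (s := w) (t := z - 2 ^ m) (by omega)
    have h3 := topCount_succ_add_le (r := r) (m := m) (s := w) (t := z - 2 ^ m) (by omega)
    simp (disch := omega) only [topCount_of_le] at h1 h2 h3 ⊢
    omega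

lemma OverflowIneqSwap.succ (hS : OverflowIneqSame m) (hW : OverflowIneqSwap m) :
    OverflowIneqSwap (m + 1) := by
  intro r x y z w hxy hy hz hw
  have hN : 2 ^ (m + 1) = 2 * 2 ^ m := pow_succ' 2 m
  rcases r with _ | r
  · simp only [topCount_succ_succ, topCount_zero_left]
    rcases le_or_gt x (2 ^ m) with hxN | hxN
    · simp (disch := omega) only [topCount_of_eq_zero]
      omega
    · have h1 := hW 0 (x - 2 ^ m) (y - 2 ^ m) w (w - 2 ^ m) (by omega) (by omega) (by omega) rfl
      simp only [topCount_zero_left] at h1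
      omega
  simp only [topCount_succ_succ]
  rcases le_or_gt y (2 ^ m) with hyN | hyN
  · have h1 := hW r x y z (z - 2 ^ m) hxy hyN hz rfl
    simp (disch := omega) only [topCount_of_eq_zero] at h1 ⊢
    omega
  rcases le_or_gt x (2 ^ m) with hxN | hxN
  · have h1 := hS (r + 1) x (y - 2 ^ m) (z - 2 ^ m) w hxN (by omega) (by omega) (by omega)
    simp (disch := omega) only [topCount_of_eq_zero, topCount_of_le] at h1 ⊢
    omega
  · have h1 := hW (r + 1) (x - 2 ^ m) (y - 2 ^ m) w (w - 2 ^ m)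
      (by omega) (by omega) (by omega) rfl
    simp (disch := omega) only [topCount_of_le] at h1 ⊢
    omega

lemma overflowIneqs (m : ℕ) :
    OverflowIneqSame m ∧ OverflowIneqKeep m ∧ OverflowIneqSwap m := by
  induction m with
  | zero => exact overflowIneqs_zero
  | succ m ih =>
    obtain ⟨hS, hK, hW⟩ := ih
    exact ⟨hS.succ hK, hK.succ hS, hW.succ hS⟩

lemma topCount_add_le_topCount_succ_succ {r a b : ℕ} (hba : b ≤ a) (ha : a ≤ 2 ^ m) :
    topCount (r + 1) m b + topCount r m a ≤ topCount (r + 1) (m + 1) (a + b) := by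
  rw [topCount_succ_succ]
  exact (overflowIneqs m).2.2 r b a (a + b) _ hba ha (by omega) rfl

end Overflow

section AlphaBeta

variable {r m : ℕ}

lemma alph_add_one (m : ℕ) : alph (m + 1) = 2 ^ m + bet m := by
  rw [alph, bet, show 2 ^ (m + 1 + 1) = 2 ^ m + 3 * 2 ^ m by ring,
    Nat.add_mul_div_left _ _ three_pos, add_comm]

lemma bet_add_one (m : ℕ) : bet (m + 1) = alph m := rfl

lemma alph_lt (m : ℕ) : alph m < 2 ^ m := by
  have := Nat.one_le_two_pow (n := m)
  rw [alph, pow_succ]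
  omega

lemma topCount_bet : topCount (r + 1) (m + 1) (bet (m + 1)) = topCount r m (alph m) := by
  have := alph_lt m
  rw [topCount_succ_succ, bet_add_one, topCount_of_eq_zero (s := alph m - 2 ^ m) (by omega),
    add_zero]

lemma topCount_alph_add_two :
    topCount (r + 2) (m + 2) (alph (m + 2)) = kRM r (m + 1) + topCount (r + 1) m (alph m) := by
  rw [topCount_succ_succ, topCount_of_le (by rw [alph_add_one]; omega), card_card_lt_succ_eq_kRM,
    alph_add_one, Nat.add_sub_cancel_left, topCount_bet]

def alphaSum (r m : ℕ) : ℕ := ∑ i ∈ range ((m + 1) / 2), kRM (r - 1 - i) (m - 1 - 2 * i)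

lemma alphaSum_add_two : alphaSum (r + 1) (m + 2) = kRM r (m + 1) + alphaSum r m := by
  rw [alphaSum, show (m + 2 + 1) / 2 = (m + 1) / 2 + 1 by omega, sum_range_succ', add_comm,
    alphaSum]
  congr 1
  exact sum_congr rfl fun i _ => by congr 1 <;> omega

lemma sum_Icc_eq_alphaSum :
    ∑ i ∈ Icc 1 ((m + 1) / 2), kRM (r + 1 - 1 - i) (m + 1 - 2 * i) = alphaSum r m := by
  rw [← Ico_add_one_right_eq_Icc, sum_Ico_eq_sum_range, alphaSum, Nat.add_sub_cancel]
  exact sum_congr rfl fun i _ => by congr 1 <;> omega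

lemma topCount_alph (h : m ≤ 2 * r) : topCount (r + 1) m (alph m) = alphaSum r m := by
  induction m using Nat.twoStepInduction generalizing r with
  | zero => simp [alph, alphaSum, topCount_of_eq_zero]
  | one =>
    obtain ⟨r, rfl⟩ : ∃ r', r = r' + 1 := ⟨r - 1, by omega⟩
    simp [alph, alphaSum, topCount_succ_succ, topCount_fin_zero, kRM, sum_range_succ']
  | more m ih _ =>
    obtain ⟨r, rfl⟩ : ∃ r', r = r' + 1 := ⟨r - 1, by omega⟩
    rw [topCount_alph_add_two, ih (by omega), alphaSum_add_two]

end AlphaBeta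

section Support

variable {F : Type} [Field F] {n : ℕ}

lemma chi_mono {D E : Submodule F (Fin n → F)} (h : D ≤ E) : chi D ⊆ chi E :=
  fun _ ⟨c, hc, hci⟩ => ⟨c, h hc, hci⟩

lemma eq_bot_of_chi_eq_empty {D : Submodule F (Fin n → F)} (h : chi D = ∅) : D = ⊥ := by
  refine (Submodule.eq_bot_iff D).2 fun c hc => funext fun i => ?_
  by_contra hci
  exact (Set.eq_empty_iff_forall_notMem.1 h) i ⟨c, hc, hci⟩

lemma chi_subset_of_le_supportedOn {D : Submodule F (Fin n → F)} {J : Set (Fin n)}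
    (h : D ≤ supportedOn F J) : chi D ⊆ J := by
  rintro i ⟨c, hc, hci⟩
  by_contra hi
  exact hci (Submodule.mem_pi.1 (h hc) i hi)

lemma chi_map_funLeft {p : ℕ} (f : Fin p → Fin n) (D : Submodule F (Fin n → F)) :
    chi (D.map (LinearMap.funLeft F F f)) = f ⁻¹' chi D := by
  ext i
  simp [chi, LinearMap.funLeft]

lemma Ucap_le {C : Submodule F (Fin n → F)} {s V : ℕ}
    (h : ∀ D ≤ C, (chi D).ncard ≤ s → finrank F D ≤ V) : Ucap C s ≤ V := by
  refine csSup_le ⟨0, ⊥, bot_le, ?_, finrank_bot F _⟩ fun _ ⟨D, hD, hs, hd⟩ => hd ▸ h D hD hs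
  simp [show chi (⊥ : Submodule F (Fin n → F)) = ∅ by simp [chi]]

lemma le_Ucap {C D : Submodule F (Fin n → F)} {s : ℕ} (hD : D ≤ C) (hs : (chi D).ncard ≤ s) :
    finrank F D ≤ Ucap C s :=
  le_csSup ⟨finrank F (Fin n → F), fun _ ⟨E, _, _, hE⟩ => hE ▸ Submodule.finrank_le E⟩
    ⟨D, hD, hs, rfl⟩

end Support

lemma finrank_eq_finrank_map_add_finrank_map {K V W : Type*} [Field K] [AddCommGroup V]
    [Module K V] [FiniteDimensional K V] [AddCommGroup W] [Module K W] (D : Submodule K V)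
    (φ ψ : V →ₗ[K] W) (h : Disjoint (LinearMap.ker φ) (LinearMap.ker ψ)) :
    finrank K D = finrank K (D.map φ) + finrank K ((D ⊓ LinearMap.ker φ).map ψ) := by
  have hφ := (φ.domRestrict D).finrank_range_add_finrank_ker
  rw [LinearMap.range_domRestrict, LinearMap.ker_domRestrict, ← Submodule.finrank_map_subtype_eq,
    Submodule.map_comap_subtype] at hφ
  rw [← hφ, ← LinearMap.range_domRestrict (D ⊓ LinearMap.ker φ) ψ, LinearMap.finrank_range_of_inj
    (LinearMap.injective_domRestrict_iff.2 (h.mono_left inf_le_right))]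

lemma Set.ncard_preimage_add_ncard_preimage {α β : Type*} [Finite β] {f g : α → β}
    (hf : f.Injective) (hg : g.Injective) (hfg : ∀ a b, f a ≠ g b)
    (hcover : ∀ y, y ∈ Set.range f ∨ y ∈ Set.range g) (X : Set β) :
    (f ⁻¹' X).ncard + (g ⁻¹' X).ncard = X.ncard := by
  rw [← Set.ncard_image_of_injective _ hf, ← Set.ncard_image_of_injective _ hg,
    ← Set.ncard_union_eq, Set.image_preimage_eq_inter_range, Set.image_preimage_eq_inter_range,
    ← Set.inter_union_distrib_left, Set.eq_univ_of_forall (s := Set.range f ∪ Set.range g) hcover,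
    Set.inter_univ]
  rw [Set.disjoint_left]
  rintro _ ⟨a, -, rfl⟩ ⟨b, -, hb⟩
  exact hfg a b hb.symm

section Monomials

variable {m : ℕ}

def monomialVec (S : Finset (Fin m)) : Fin (2 ^ m) → ZMod 2 :=
  fun i => ∏ j ∈ S, if i.val.testBit j then 1 else 0

lemma monomialVec_apply (S : Finset (Fin m)) (i : Fin (2 ^ m)) :
    monomialVec S i = if ∀ j ∈ S, i.val.testBit j then 1 else 0 := by
  unfold monomialVec
  rw [prod_boole]
  congr

def monomialSpan (r m : ℕ) : Submodule (ZMod 2) (Fin (2 ^ m) → ZMod 2) :=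
  Submodule.span (ZMod 2) (monomialVec '' {S | #S < r})

lemma monomialSpan_mono {r r' : ℕ} (h : r ≤ r') : monomialSpan r m ≤ monomialSpan r' m :=
  Submodule.span_mono <| Set.image_mono fun _ (hS : _ < r) => show _ < r' by omega

lemma monomialSpan_zero : monomialSpan 0 m = ⊥ := by
  simp [monomialSpan]

lemma eval_bits_eq_sum_monomialVec (f : MvPolynomial (Fin m) (ZMod 2)) :
    (fun i : Fin (2 ^ m) => MvPolynomial.eval
        (fun j : Fin m => if i.val.testBit j then (1 : ZMod 2) else 0) f)
      = ∑ d ∈ f.support, MvPolynomial.coeff d f • monomialVec d.support := by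
  funext i
  rw [Finset.sum_apply, MvPolynomial.eval_eq]
  refine sum_congr rfl fun d _ => ?_
  rw [Pi.smul_apply, smul_eq_mul, monomialVec]
  congr 1
  refine prod_congr rfl fun j hj => ?_
  split_ifs
  · exact one_pow _
  · exact zero_pow (Finsupp.mem_support_iff.1 hj)

lemma card_support_le_totalDegree {R σ : Type*} [CommSemiring R] {f : MvPolynomial σ R}
    {d : σ →₀ ℕ}
    (hd : d ∈ f.support) : #d.support ≤ f.totalDegree :=
  calc #d.support = ∑ _j ∈ d.support, 1 := card_eq_sum_ones _
    _ ≤ ∑ j ∈ d.support, d j :=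
        sum_le_sum fun _ hj => Nat.one_le_iff_ne_zero.2 (Finsupp.mem_support_iff.1 hj)
    _ ≤ f.totalDegree := MvPolynomial.le_totalDegree hd

lemma RMcode_eq_monomialSpan (r m : ℕ) : RMcode r m = monomialSpan (r + 1) m := by
  refine le_antisymm (Submodule.span_le.2 ?_) (Submodule.span_le.2 ?_)
  · rintro _ ⟨f, hf, rfl⟩
    rw [SetLike.mem_coe, eval_bits_eq_sum_monomialVec]
    exact Submodule.sum_mem _ fun d hd => Submodule.smul_mem _ _
      (Submodule.subset_span ⟨_, Nat.lt_succ_of_le ((card_support_le_totalDegree hd).trans hf),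
        rfl⟩)
  · rintro _ ⟨S, hS, rfl⟩
    refine Submodule.subset_span ⟨∏ j ∈ S, MvPolynomial.X j, ?_, ?_⟩
    · calc (∏ j ∈ S, MvPolynomial.X j : MvPolynomial (Fin m) (ZMod 2)).totalDegree
          ≤ ∑ j ∈ S, (MvPolynomial.X j : MvPolynomial (Fin m) (ZMod 2)).totalDegree :=
            MvPolynomial.totalDegree_finsetProd _ _
        _ = #S := by simp
        _ ≤ r := Nat.lt_succ_iff.1 hS
    · funext i
      simp [monomialVec]

end Monomials

section LowerBound

variable {m : ℕ}

lemma twoPowSum_le_of_monomialVec_ne_zero {S : Finset (Fin m)} {i : Fin (2 ^ m)}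
    (h : monomialVec S i ≠ 0) : twoPowSum S ≤ i := by
  rw [monomialVec_apply] at h
  split_ifs at h with hS
  · exact twoPowSum_le_of_testBit hS
  · exact absurd rfl h

def bitsIndex (S : Finset (Fin m)) : Fin (2 ^ m) := ⟨twoPowSum S, twoPowSum_lt S⟩

lemma monomialVec_bitsIndex (T S : Finset (Fin m)) :
    monomialVec T (bitsIndex S) = if T ⊆ S then 1 else 0 := by
  simp only [monomialVec_apply, bitsIndex, testBit_twoPowSum, subset_iff]

lemma linearIndependent_monomialVec : LinearIndependent (ZMod 2) (monomialVec (m := m)) := by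
  rw [Fintype.linearIndependent_iff]
  intro g hg S
  induction S using Finset.strongInduction with
  | H S ih =>
    have h0 := congrFun hg (bitsIndex S)
    simp only [Finset.sum_apply, Pi.smul_apply, monomialVec_bitsIndex, smul_eq_mul, mul_ite,
      mul_one, mul_zero, sum_ite, sum_const_zero, add_zero, filter_subset_univ,
      Pi.zero_apply] at h0
    rwa [sum_eq_single_of_mem S (mem_powerset_self S)
      fun T hT hTS => ih T (Finset.ssubset_iff_subset_ne.2 ⟨mem_powerset.1 hT, hTS⟩)] at h0

lemma ncard_top_le (s : ℕ) : {i : Fin (2 ^ m) | 2 ^ m ≤ i + s}.ncard ≤ s := by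
  calc {i : Fin (2 ^ m) | 2 ^ m ≤ i + s}.ncard
      ≤ (Set.Ico (2 ^ m - s) (2 ^ m)).ncard :=
        Set.ncard_le_ncard_of_injOn Fin.val (fun i hi => ⟨by simp at hi; omega, i.isLt⟩)
          Fin.val_injective.injOn
    _ ≤ s := by simp [Set.ncard_eq_toFinset_card']; omega

theorem topCount_le_Ucap (r m s : ℕ) : topCount r m s ≤ Ucap (monomialSpan r m) s := by
  set D := Submodule.span (ZMod 2) (monomialVec '' (topMonomials r m s : Set (Finset (Fin m))))
    with hD
  have hrank : finrank (ZMod 2) D = topCount r m s := by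
    rw [hD, Set.image_eq_range]
    exact (finrank_span_eq_card (linearIndependent_monomialVec.comp _ Subtype.val_injective)).trans
      (by simp [topCount])
  have hsupp : D ≤ supportedOn (ZMod 2) {i : Fin (2 ^ m) | 2 ^ m ≤ i + s} := by
    refine Submodule.span_le.2 ?_
    rintro _ ⟨S, hS, rfl⟩
    refine Submodule.mem_pi.2 fun i hi => (Submodule.mem_bot _).2 ?_
    by_contra hne
    have := twoPowSum_le_of_monomialVec_ne_zero hne
    simp [topMonomials] at hS hi
    omega
  rw [← hrank]
  exact le_Ucap (Submodule.span_mono (Set.image_mono fun S hS => (mem_filter.1 hS).2.1))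
    ((Set.ncard_le_ncard (chi_subset_of_le_supportedOn hsupp)).trans (ncard_top_le s))

end LowerBound

section Plotkin

variable {m : ℕ}

def lowIdx (i : Fin (2 ^ m)) : Fin (2 ^ (m + 1)) :=
  ⟨i, by have := i.isLt; rw [pow_succ]; omega⟩

def highIdx (i : Fin (2 ^ m)) : Fin (2 ^ (m + 1)) :=
  ⟨2 ^ m + i, by have := i.isLt; rw [pow_succ]; omega⟩

lemma lowIdx_injective : (lowIdx (m := m)).Injective :=
  fun _ _ h => Fin.ext (by simpa [lowIdx] using congrArg Fin.val h)

lemma highIdx_injective : (highIdx (m := m)).Injective :=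
  fun _ _ h => Fin.ext (by simpa [highIdx] using congrArg Fin.val h)

lemma exists_highIdx_eq {y : Fin (2 ^ (m + 1))} (hy : 2 ^ m ≤ (y : ℕ)) : ∃ i, highIdx i = y :=
  ⟨⟨y - 2 ^ m, by have := y.isLt; have := pow_succ 2 m; omega⟩,
    Fin.ext (by simp only [highIdx]; omega)⟩

lemma ncard_preimage_lowIdx_add_highIdx (X : Set (Fin (2 ^ (m + 1)))) :
    (lowIdx ⁻¹' X).ncard + (highIdx ⁻¹' X).ncard = X.ncard := by
  refine Set.ncard_preimage_add_ncard_preimage lowIdx_injective highIdx_injective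
    (fun a b h => ?_) (fun y => ?_) X
  · have := congrArg Fin.val h
    simp only [lowIdx, highIdx] at this
    omega
  · rcases lt_or_ge (y : ℕ) (2 ^ m) with hy | hy
    · exact Or.inl ⟨⟨y, hy⟩, rfl⟩
    · exact Or.inr (exists_highIdx_eq hy)

abbrev lowHalf : (Fin (2 ^ (m + 1)) → ZMod 2) →ₗ[ZMod 2] Fin (2 ^ m) → ZMod 2 :=
  LinearMap.funLeft _ _ lowIdx

abbrev highHalf : (Fin (2 ^ (m + 1)) → ZMod 2) →ₗ[ZMod 2] Fin (2 ^ m) → ZMod 2 :=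
  LinearMap.funLeft _ _ highIdx

lemma disjoint_ker_lowHalf_highHalf :
    Disjoint (LinearMap.ker (lowHalf (m := m))) (LinearMap.ker highHalf) := by
  refine Submodule.disjoint_def.2 fun c h0 h1 => funext fun y => ?_
  rcases lt_or_ge (y : ℕ) (2 ^ m) with hy | hy
  · exact congrFun (LinearMap.mem_ker.1 h0) ⟨y, hy⟩
  · obtain ⟨i, rfl⟩ := exists_highIdx_eq hy
    exact congrFun (LinearMap.mem_ker.1 h1) i

def dropLast (S : Finset (Fin (m + 1))) : Finset (Fin m) := {j | j.castSucc ∈ S}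

lemma map_dropLast_subset (S : Finset (Fin (m + 1))) :
    (dropLast S).map Fin.castSuccEmb ⊆ S.erase (Fin.last m) := by
  intro x hx
  obtain ⟨j, hj, rfl⟩ := mem_map.1 hx
  exact mem_erase.2 ⟨Fin.castSucc_ne_last j, (mem_filter.1 hj).2⟩

lemma card_dropLast_le (S : Finset (Fin (m + 1))) : #(dropLast S) ≤ #S :=
  (card_map _).symm.trans_le ((card_le_card (map_dropLast_subset S)).trans (card_erase_le ..))

lemma card_dropLast_lt {S : Finset (Fin (m + 1))} (h : Fin.last m ∈ S) :
    #(dropLast S) < #S := by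
  have := card_le_card (map_dropLast_subset S)
  rw [card_map, card_erase_of_mem h] at this
  have := card_pos.2 ⟨_, h⟩
  omega

lemma forall_mem_iff_dropLast {P : Fin (m + 1) → Prop} (S : Finset (Fin (m + 1))) :
    (∀ j ∈ S, P j) ↔ (∀ j ∈ dropLast S, P j.castSucc) ∧ (Fin.last m ∈ S → P (Fin.last m)) := by
  simp [dropLast, Fin.forall_fin_succ']

lemma lowHalf_monomialVec (S : Finset (Fin (m + 1))) :
    lowHalf (monomialVec S) = if Fin.last m ∈ S then 0 else monomialVec (dropLast S) := by
  funext i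
  have hlast : (i : ℕ).testBit m = false := Nat.testBit_lt_two_pow i.isLt
  simp only [LinearMap.funLeft_apply, monomialVec_apply, forall_mem_iff_dropLast S]
  split_ifs <;> simp_all [lowIdx, monomialVec_apply]

lemma highHalf_monomialVec (S : Finset (Fin (m + 1))) :
    highHalf (monomialVec S) = monomialVec (dropLast S) := by
  funext i
  have hlast : (2 ^ m + i : ℕ).testBit m = true := by
    rw [Nat.testBit_two_pow_add_eq, Nat.testBit_lt_two_pow i.isLt, Bool.not_false]
  have hbits (j : Fin m) : (2 ^ m + i : ℕ).testBit j = (i : ℕ).testBit j :=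
    Nat.testBit_two_pow_add_gt j.isLt _
  simp only [LinearMap.funLeft_apply, monomialVec_apply, forall_mem_iff_dropLast S]
  split_ifs <;> simp_all [highIdx]

/-- The Plotkin decomposition `RM(r, m + 1) ⊆ {(u | u + v) : u ∈ RM(r, m), v ∈ RM(r - 1, m)}`. -/
lemma monomialSpan_succ_le (r : ℕ) :
    monomialSpan (r + 1) (m + 1) ≤ (monomialSpan (r + 1) m).comap lowHalf ⊓
      (monomialSpan r m).comap (highHalf - lowHalf) := by
  refine Submodule.span_le.2 ?_
  rintro _ ⟨S, hS, rfl⟩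
  have hspan {r' : ℕ} (h : #(dropLast S) < r') :
      monomialVec (dropLast S) ∈ monomialSpan r' m :=
    Submodule.subset_span ⟨_, h, rfl⟩
  simp only [SetLike.mem_coe, Submodule.mem_inf, Submodule.mem_comap, LinearMap.sub_apply,
    lowHalf_monomialVec, highHalf_monomialVec]
  split_ifs with h
  · exact ⟨zero_mem _, by simpa using hspan (by have := card_dropLast_lt h; simp at hS; omega)⟩
  · exact ⟨hspan (by have := card_dropLast_le S; simp at hS; omega), by simp⟩

variable {r : ℕ} {D : Submodule (ZMod 2) (Fin (2 ^ (m + 1)) → ZMod 2)}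

lemma map_lowHalf_le (hD : D ≤ monomialSpan (r + 1) (m + 1)) :
    D.map lowHalf ≤ monomialSpan (r + 1) m :=
  Submodule.map_le_iff_le_comap.2 fun _ hc => (monomialSpan_succ_le r (hD hc)).1

lemma map_highHalf_le (hD : D ≤ monomialSpan (r + 1) (m + 1)) :
    D.map highHalf ≤ monomialSpan (r + 1) m := by
  refine Submodule.map_le_iff_le_comap.2 fun c hc => ?_
  have h := monomialSpan_succ_le r (hD hc)
  simp only [Submodule.mem_inf, Submodule.mem_comap, LinearMap.sub_apply] at h
  simpa using add_mem h.1 (monomialSpan_mono r.le_succ h.2)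

lemma map_inf_ker_lowHalf_le (hD : D ≤ monomialSpan (r + 1) (m + 1)) :
    (D ⊓ LinearMap.ker lowHalf).map highHalf ≤ monomialSpan r m := by
  refine Submodule.map_le_iff_le_comap.2 fun c hc => ?_
  simpa [LinearMap.mem_ker.1 hc.2] using (monomialSpan_succ_le r (hD hc.1)).2

lemma map_inf_ker_highHalf_le (hD : D ≤ monomialSpan (r + 1) (m + 1)) :
    (D ⊓ LinearMap.ker highHalf).map lowHalf ≤ monomialSpan r m := by
  refine Submodule.map_le_iff_le_comap.2 fun c hc => ?_
  simpa [LinearMap.mem_ker.1 hc.2] using neg_mem (monomialSpan_succ_le r (hD hc.1)).2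

end Plotkin

section UpperBound

variable {m : ℕ}

lemma finrank_le_topCount_add {r : ℕ}
    (ih : ∀ r (E : Submodule (ZMod 2) (Fin (2 ^ m) → ZMod 2)),
      E ≤ monomialSpan r m → finrank (ZMod 2) E ≤ topCount r m (chi E).ncard)
    {D : Submodule (ZMod 2) (Fin (2 ^ (m + 1)) → ZMod 2)} (f g : Fin (2 ^ m) → Fin (2 ^ (m + 1)))
    (hfg : Disjoint (LinearMap.ker (LinearMap.funLeft (ZMod 2) (ZMod 2) f))
      (LinearMap.ker (LinearMap.funLeft (ZMod 2) (ZMod 2) g)))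
    (hf : D.map (LinearMap.funLeft _ _ f) ≤ monomialSpan (r + 1) m)
    (hg : (D ⊓ LinearMap.ker (LinearMap.funLeft _ _ f)).map (LinearMap.funLeft _ _ g) ≤
      monomialSpan r m) :
    finrank (ZMod 2) D ≤
      topCount (r + 1) m (f ⁻¹' chi D).ncard + topCount r m (g ⁻¹' chi D).ncard := by
  rw [finrank_eq_finrank_map_add_finrank_map D _ _ hfg]
  refine add_le_add ((ih _ _ hf).trans_eq (by rw [chi_map_funLeft]))
    ((ih _ _ hg).trans (topCount_mono_right ?_))
  rw [← chi_map_funLeft]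
  exact Set.ncard_le_ncard (chi_mono (Submodule.map_mono inf_le_left))

lemma ncard_set_fin_le {n : ℕ} (X : Set (Fin n)) : X.ncard ≤ n :=
  (Set.ncard_le_card X).trans_eq (Nat.card_eq_fintype_card.trans (Fintype.card_fin n))

theorem finrank_le_topCount (m : ℕ) : ∀ r (D : Submodule (ZMod 2) (Fin (2 ^ m) → ZMod 2)),
    D ≤ monomialSpan r m → finrank (ZMod 2) D ≤ topCount r m (chi D).ncard := by
  induction m with
  | zero =>
    intro r D hD
    rw [topCount_fin_zero]
    rcases Nat.eq_zero_or_pos r with rfl | hr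
    · simp [le_bot_iff.1 (monomialSpan_zero (m := 0) ▸ hD)]
    rcases Nat.eq_zero_or_pos (chi D).ncard with h0 | h0
    · rw [if_neg (by omega), eq_bot_of_chi_eq_empty ((Set.ncard_eq_zero).1 h0), finrank_bot]
    · rw [if_pos ⟨hr, h0⟩]
      simpa using Submodule.finrank_le D
  | succ m ih =>
    intro r D hD
    rcases r with _ | r
    · simp [le_bot_iff.1 (monomialSpan_zero (m := m + 1) ▸ hD)]
    have hlow := finrank_le_topCount_add ih lowIdx highIdx disjoint_ker_lowHalf_highHalf
      (map_lowHalf_le hD) (map_inf_ker_lowHalf_le hD)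
    have hhigh := finrank_le_topCount_add ih highIdx lowIdx disjoint_ker_lowHalf_highHalf.symm
      (map_highHalf_le hD) (map_inf_ker_highHalf_le hD)
    rw [← ncard_preimage_lowIdx_add_highIdx (chi D)]
    rcases le_total (highIdx ⁻¹' chi D).ncard (lowIdx ⁻¹' chi D).ncard with h | h
    · exact hhigh.trans (topCount_add_le_topCount_succ_succ h (ncard_set_fin_le _))
    · exact hlow.trans ((topCount_add_le_topCount_succ_succ h (ncard_set_fin_le _)).trans_eq
        (by rw [Nat.add_comm (highIdx ⁻¹' chi D).ncard]))

end UpperBound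

theorem Ucap_RMcode (r m s : ℕ) : Ucap (RMcode r m) s = topCount (r + 1) m s := by
  rw [RMcode_eq_monomialSpan]
  refine le_antisymm (Ucap_le fun D hD hs => ?_) (topCount_le_Ucap _ _ _)
  exact (finrank_le_topCount m _ D hD).trans (topCount_mono_right hs)

theorem stmt13_general (r m : ℕ) (hm : 2 ≤ m) (h : m < 2 * r) :
    Ucap (RMcode r m) (alph m) =
      (if m % 2 = 1 then
        ∑ i ∈ Finset.range ((m - 1) / 2 + 1), kRM (r - 1 - i) (m - 1 - 2 * i)
      else
        ∑ i ∈ Finset.range ((m - 2) / 2 + 1), kRM (r - 1 - i) (m - 1 - 2 * i)) ∧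
    Ucap (RMcode r m) (bet m) =
      (if m % 2 = 1 then
        ∑ i ∈ Finset.Icc 1 ((m - 1) / 2), kRM (r - 1 - i) (m - 2 * i)
      else
        ∑ i ∈ Finset.Icc 1 (m / 2), kRM (r - 1 - i) (m - 2 * i)) := by
  obtain ⟨m, rfl⟩ : ∃ m', m = m' + 1 := ⟨m - 1, by omega⟩
  obtain ⟨r, rfl⟩ : ∃ r', r = r' + 1 := ⟨r - 1, by omega⟩
  refine ⟨?_, ?_⟩
  · rw [Ucap_RMcode, topCount_alph (by omega), alphaSum]
    split_ifs <;> (congr 2; omega)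
  · rw [Ucap_RMcode, topCount_bet, topCount_alph (by omega), ← sum_Icc_eq_alphaSum]
    split_ifs
    · congr 2; omega
    · rfl

/-- for `m ≥ 2`, `r ≤ m` and `m < 2r`, the values of
`U_α(RM(r,m))` and `U_β(RM(r,m))`, according to the parity of `m`. -/
theorem stmt13 (r m : ℕ) (hm : 2 ≤ m) (hrm : r ≤ m) (h : m < 2 * r) :
    Ucap (RMcode r m) (alph m) =
      (if m % 2 = 1 then
        ∑ i ∈ Finset.range ((m - 1) / 2 + 1), kRM (r - 1 - i) (m - 1 - 2 * i)
      else
        ∑ i ∈ Finset.range ((m - 2) / 2 + 1), kRM (r - 1 - i) (m - 1 - 2 * i)) ∧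
    Ucap (RMcode r m) (bet m) =
      (if m % 2 = 1 then
        ∑ i ∈ Finset.Icc 1 ((m - 1) / 2), kRM (r - 1 - i) (m - 2 * i)
      else
        ∑ i ∈ Finset.Icc 1 (m / 2), kRM (r - 1 - i) (m - 2 * i)) :=
  stmt13_general r m hm h
end

section
/- For every integer m ≥ 2 and all integers i, j with 0 ≤ i ≤ α^(m) − 2^{m−1} and 0 ≤ j ≤ α^(m) − 2^{m−1}, the statement P^(m)(i,j) holds; that is, for every l ∈ {1,…,m}, w_l([α^(m)−i, α^(m)−1]) + w_l([β^(m)−j, β^(m)−1]) ≥ w_l([1, i+j]). -/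
open Module

/-- `wt x`: the number of ones in the binary representation of `x`. -/
def wtN (x : ℕ) : ℕ := (Nat.digits 2 x).count 1

/-- `w_l(S)`: the number of elements of `S` of binary weight at least `l`. -/
def wcount (l : ℕ) (S : Finset ℕ) : ℕ := (S.filter fun x => l ≤ wtN x).card

/-- The statement `P^(m)(i,j)`: for every `l ∈ {1,…,m}`,
`w_l([α−i, α−1]) + w_l([β−j, β−1]) ≥ w_l([1, i+j])`. -/
def Pm (m i j : ℕ) : Prop :=
  ∀ l, 1 ≤ l → l ≤ m →
    wcount l (Finset.Icc (alph m - i) (alph m - 1)) +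
      wcount l (Finset.Icc (bet m - j) (bet m - 1)) ≥
      wcount l (Finset.Icc 1 (i + j))

/-!
Splitting `[p, q]` into odd and even elements and halving them, the elements of weight `≥ l + 1`
become the elements of weight `≥ l` of `[p / 2, (q - 1) / 2]` and those of weight `≥ l + 1` of
`[(p + 1) / 2, q / 2]`; the same happens to `[1, t]`. Since `α^(m+1) / 2 = α^(m)`, halving an
interval that ends at `α^(m+1)` or one less gives intervals ending at `α^(m)` or one less, so the
inequality follows by induction on `m` once it is strengthened to intervals of length up to
`α^(m-2) + 1`. That strengthening fails for `m = 3`, so the induction starts at `m = 4`, checked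
by computation, as are the cases `m ≤ 3` of the theorem.
-/

open Finset

lemma wtN_two_mul (n : ℕ) : wtN (2 * n) = wtN n := by
  rcases Nat.eq_zero_or_pos n with rfl | hn
  · rfl
  · rw [wtN, Nat.digits_def' one_lt_two (by omega)]
    simp [wtN]

lemma wtN_two_mul_add_one (n : ℕ) : wtN (2 * n + 1) = wtN n + 1 := by
  rw [wtN, Nat.digits_def' one_lt_two (by omega)]
  simp [wtN, Nat.mul_add_div]

lemma wtN_pos {n : ℕ} (hn : n ≠ 0) : 0 < wtN n := by
  induction n using Nat.strong_induction_on with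
  | _ n ih =>
    obtain ⟨k, rfl | rfl⟩ := Nat.even_or_odd' n
    · rw [wtN_two_mul]; exact ih k (by omega) (by omega)
    · rw [wtN_two_mul_add_one]; omega

lemma wcount_le_of_le {l l' : ℕ} (h : l ≤ l') (S : Finset ℕ) : wcount l' S ≤ wcount l S :=
  card_le_card (monotone_filter_right S fun _ _ hx => h.trans hx)

lemma wcount_one_Icc {a : ℕ} (ha : 1 ≤ a) (b : ℕ) : wcount 1 (Icc a b) = b + 1 - a := by
  rw [wcount, filter_true_of_mem (p := fun x => 1 ≤ wtN x)
    fun x hx => wtN_pos (by simp at hx; omega), Nat.card_Icc]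

/-- The odd elements of weight `≥ l + 1` are the `2k + 1` with `wt k ≥ l`, the even ones the `2k`
with `wt k ≥ l + 1`. -/
lemma wcount_succ_Icc {l : ℕ} (hl : 1 ≤ l) (a b : ℕ) :
    wcount (l + 1) (Icc a b) =
      wcount l (Icc (a / 2) ((b - 1) / 2)) + wcount (l + 1) (Icc ((a + 1) / 2) (b / 2)) := by
  have hodd : {x ∈ Icc a b | l + 1 ≤ wtN x ∧ x % 2 = 1} =
      {k ∈ Icc (a / 2) ((b - 1) / 2) | l ≤ wtN k}.image (2 * · + 1) := by
    ext x
    simp only [mem_filter, mem_Icc, mem_image]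
    constructor
    · rintro ⟨hx, hw, hpar⟩
      obtain ⟨k, rfl⟩ : ∃ k, x = 2 * k + 1 := ⟨x / 2, by omega⟩
      rw [wtN_two_mul_add_one] at hw
      exact ⟨k, ⟨by omega, by omega⟩, rfl⟩
    · rintro ⟨k, ⟨hk, hw⟩, rfl⟩
      have : k ≠ 0 := by rintro rfl; simp [wtN] at hw; omega
      rw [wtN_two_mul_add_one]
      omega
  have heven : {x ∈ Icc a b | l + 1 ≤ wtN x ∧ ¬x % 2 = 1} =
      {k ∈ Icc ((a + 1) / 2) (b / 2) | l + 1 ≤ wtN k}.image (2 * ·) := by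
    ext x
    simp only [mem_filter, mem_Icc, mem_image]
    constructor
    · rintro ⟨hx, hw, hpar⟩
      obtain ⟨k, rfl⟩ : ∃ k, x = 2 * k := ⟨x / 2, by omega⟩
      rw [wtN_two_mul] at hw
      exact ⟨k, ⟨by omega, hw⟩, rfl⟩
    · rintro ⟨k, ⟨hk, hw⟩, rfl⟩
      rw [wtN_two_mul]
      omega
  rw [wcount, ← card_filter_add_card_filter_not (fun x => x % 2 = 1), filter_filter,
    filter_filter, hodd, heven, card_image_of_injective _ fun x y h => by simp at h; omega,
    card_image_of_injective _ fun x y h => by simp at h; omega, wcount, wcount]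

lemma wcount_succ_Icc_one {l : ℕ} (hl : 1 ≤ l) (t : ℕ) :
    wcount (l + 1) (Icc 1 t) = wcount l (Icc 1 ((t - 1) / 2)) + wcount (l + 1) (Icc 1 (t / 2)) := by
  have hzero : wcount l (Icc 0 ((t - 1) / 2)) = wcount l (Icc 1 ((t - 1) / 2)) := by
    rw [← insert_Icc_add_one_left_eq_Icc (Nat.zero_le _), wcount, filter_insert,
      if_neg (by simp [wtN]; omega)]
    rfl
  rw [wcount_succ_Icc hl]
  exact congrArg (· + _) hzero

lemma wcount_Icc_one_add_one (l s : ℕ) :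
    wcount l (Icc 1 (s + 1)) = wcount l (Icc 1 s) + if l ≤ wtN (s + 1) then 1 else 0 := by
  simp only [wcount, card_filter]
  exact sum_Icc_succ_top (by omega) _

lemma wcount_Icc_one_exchange (l s : ℕ) :
    wcount (l + 1) (Icc 1 (s + 1)) + wcount l (Icc 1 s) ≤
      wcount (l + 1) (Icc 1 s) + wcount l (Icc 1 (s + 1)) := by
  rw [wcount_Icc_one_add_one, wcount_Icc_one_add_one]
  split_ifs <;> omega

/-- Recombining bounds on the two halves `⌊(t-1)/2⌋` and `⌊t/2⌋` of `t`: when the bound for `G`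
runs out one step early, the exchange inequality `hFG` moves the last step over to `F`. -/
lemma add_le_of_halves {F G : ℕ → ℕ} {X Y a b t : ℕ} (hF : ∀ s ≤ a, F s ≤ X)
    (hG : ∀ s ≤ b, G s ≤ Y) (hFG : ∀ s, G (s + 1) + F s ≤ G s + F (s + 1))
    (hab : a ≤ b + 2) (hba : b ≤ a + 2) (ht : t ≤ a + b) :
    F ((t - 1) / 2) + G (t / 2) ≤ X + Y := by
  by_cases htb : t / 2 ≤ b
  · exact add_le_add (hF _ (by omega)) (hG _ htb)
  · obtain rfl : t = 2 * b + 2 := by omega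
    have hsplit : (2 * b + 2 - 1) / 2 = b ∧ (2 * b + 2) / 2 = b + 1 := by omega
    rw [hsplit.1, hsplit.2]
    calc F b + G (b + 1) ≤ G b + F (b + 1) := by linarith [hFG b]
      _ ≤ X + Y := by linarith [hG b le_rfl, hF (b + 1) (by omega)]

lemma alph_succ_div_two (m : ℕ) : alph (m + 1) / 2 = alph m := by
  rw [alph, alph, Nat.div_div_eq_div_mul, pow_succ, Nat.mul_div_mul_right _ _ two_pos]

lemma alph_add_two (n : ℕ) : alph (n + 2) = alph n + 2 ^ (n + 1) := by
  rw [alph, alph, show 2 ^ (n + 2 + 1) = 2 ^ (n + 1) + 3 * 2 ^ (n + 1) by ring,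
    Nat.add_mul_div_left _ _ three_pos]

lemma two_le_alph {n : ℕ} (hn : 2 ≤ n) : 2 ≤ alph n := by
  rw [alph, Nat.le_div_iff_mul_le three_pos]
  calc 2 * 3 ≤ 2 ^ 3 := by norm_num
    _ ≤ 2 ^ (n + 1) := Nat.pow_le_pow_right two_pos (by omega)

lemma odd_add_even_length {p q : ℕ} (hq : 1 ≤ q) (hpq : p ≤ q + 1) :
    ((q - 1) / 2 + 1 - p / 2) + (q / 2 + 1 - (p + 1) / 2) = q + 1 - p := by
  omega

/-- The slack `+ 1` in the length bound is what makes this notion stable under halving. -/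
structure IsAlphWindow (m n p q : ℕ) : Prop where
  one_le : 1 ≤ p
  le_succ : p ≤ q + 1
  alph_le : alph m ≤ q + 1
  le_alph : q ≤ alph m
  length_le : q + 1 - p ≤ alph n + 1

lemma IsAlphWindow.half {m n p q : ℕ} (h : IsAlphWindow (m + 1) (n + 1) p q) (hp : 2 ≤ p) :
    IsAlphWindow m n (p / 2) ((q - 1) / 2) ∧ IsAlphWindow m n ((p + 1) / 2) (q / 2) := by
  have hm := alph_succ_div_two m
  have hn := alph_succ_div_two n
  obtain ⟨_, _, _, _, _⟩ := h
  exact ⟨⟨by omega, by omega, by omega, by omega, by omega⟩,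
    ⟨by omega, by omega, by omega, by omega, by omega⟩⟩

lemma wcount_le_of_alphWindow_two {p q p' q' l t : ℕ} (h : IsAlphWindow 4 2 p q)
    (h' : IsAlphWindow 3 2 p' q') (hl : 1 ≤ l) (ht : t ≤ (q + 1 - p) + (q' + 1 - p')) :
    wcount l (Icc 1 t) ≤ wcount l (Icc p q) + wcount l (Icc p' q') := by
  have ha : alph 4 = 10 ∧ alph 3 = 5 ∧ alph 2 = 2 := by decide
  obtain ⟨_, _, _, _, _⟩ := h
  obtain ⟨_, _, _, _, _⟩ := h'
  rcases le_or_gt l 2 with hl2 | hl2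
  · have hcheck : ∀ q ∈ Icc 9 10, ∀ p ∈ Icc (q - 2) (q + 1), ∀ q' ∈ Icc 4 5,
        ∀ p' ∈ Icc (q' - 2) (q' + 1), ∀ t ≤ (q + 1 - p) + (q' + 1 - p'), ∀ l ∈ Icc 1 2,
        wcount l (Icc 1 t) ≤ wcount l (Icc p q) + wcount l (Icc p' q') := by
      decide
    exact hcheck q (by simp; omega) p (by simp; omega) q' (by simp; omega) p' (by simp; omega)
      t ht l (by simp; omega)
  · have hcheck : ∀ t ≤ 6, wcount 3 (Icc 1 t) = 0 := by decide
    calc wcount l (Icc 1 t) ≤ wcount 3 (Icc 1 t) := wcount_le_of_le hl2 _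
      _ = 0 := hcheck t (by omega)
      _ ≤ _ := Nat.zero_le _

theorem wcount_le_of_alphWindow {n : ℕ} (hn : 2 ≤ n) {p q p' q' l t : ℕ}
    (h : IsAlphWindow (n + 2) n p q) (h' : IsAlphWindow (n + 1) n p' q') (hl : 1 ≤ l)
    (ht : t ≤ (q + 1 - p) + (q' + 1 - p')) :
    wcount l (Icc 1 t) ≤ wcount l (Icc p q) + wcount l (Icc p' q') := by
  induction n, hn using Nat.le_induction generalizing p q p' q' l t with
  | base => exact wcount_le_of_alphWindow_two h h' hl ht
  | succ n hn ih =>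
    replace h : IsAlphWindow (n + 1 + 1 + 1) (n + 1) p q := h
    have := alph_succ_div_two n
    have := alph_succ_div_two (n + 1)
    have := alph_succ_div_two (n + 1 + 1)
    have := two_le_alph hn
    obtain ⟨_, _, _, _, _⟩ := id h
    obtain ⟨_, _, _, _, _⟩ := id h'
    obtain ⟨hodd, heven⟩ := IsAlphWindow.half (m := n + 1 + 1) h (by omega)
    obtain ⟨hodd', heven'⟩ := IsAlphWindow.half (m := n + 1) h' (by omega)
    rcases Nat.lt_or_ge l 2 with hl2 | hl2
    · obtain rfl : l = 1 := by omega
      rw [wcount_one_Icc le_rfl, wcount_one_Icc h.one_le, wcount_one_Icc h'.one_le]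
      omega
    · obtain ⟨k, rfl⟩ : ∃ k, l = k + 1 := ⟨l - 1, by omega⟩
      have hk : 1 ≤ k := by omega
      rw [wcount_succ_Icc_one hk, wcount_succ_Icc hk p, wcount_succ_Icc hk p']
      have := add_le_of_halves (fun s hs => ih hodd hodd' hk hs)
        (fun s hs => ih heven heven' (by omega) hs) (wcount_Icc_one_exchange k)
        (by omega) (by omega) (t := t) (by
          rw [add_add_add_comm, odd_add_even_length (by omega) h.le_succ,
            odd_add_even_length (by omega) h'.le_succ]
          exact ht)
      omega

lemma pm_of_le_three :
    ∀ m ≤ 3, ∀ i ≤ alph m - 2 ^ (m - 1), ∀ j ≤ alph m - 2 ^ (m - 1), Pm m i j := by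
  unfold Pm; decide

theorem stmt14_general (m : ℕ) (i j : ℕ)
    (hi : i ≤ alph m - 2 ^ (m - 1)) (hj : j ≤ alph m - 2 ^ (m - 1)) :
    Pm m i j := by
  rcases le_or_gt m 3 with hm3 | hm4
  · exact pm_of_le_three m hm3 i hi j hj
  obtain ⟨n, rfl⟩ : ∃ n, m = n + 2 := ⟨m - 2, by omega⟩
  rw [show n + 2 - 1 = n + 1 by omega] at hi hj
  have := alph_add_two n
  have := Nat.one_le_two_pow (n := n + 1)
  have := alph_succ_div_two n
  have := two_le_alph (n := n) (by omega)
  have hbet : bet (n + 2) = alph (n + 1) := rfl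
  intro l hl _
  rw [ge_iff_le, hbet]
  exact wcount_le_of_alphWindow (n := n) (by omega)
    ⟨by omega, by omega, by omega, by omega, by omega⟩
    ⟨by omega, by omega, by omega, by omega, by omega⟩ hl (by omega)

/-- Proposition in Appendix B: `P^(m)(i,j)` holds for every `m ≥ 2`
and all `0 ≤ i, j ≤ α^(m) − 2^{m−1}`. -/
theorem stmt14 (m : ℕ) (hm : 2 ≤ m) (i j : ℕ)
    (hi : i ≤ alph m - 2 ^ (m - 1)) (hj : j ≤ alph m - 2 ^ (m - 1)) :
    Pm m i j :=
  stmt14_general m i j hi hj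
end

section
/- Let m ≥ 2. (a) If i, j are integers with 0 ≤ i, i+2 ≤ α^(m), 0 ≤ j ≤ β^(m), the number α^(m) − i is even, and both P^(m)(i,j) and P^(m)(i+2,j) hold, then P^(m)(i+1,j) holds. (b) If i, j are integers with 0 ≤ i ≤ α^(m), 0 ≤ j, j+2 ≤ β^(m), the number β^(m) − j is even, and both P^(m)(i,j) and P^(m)(i,j+2) hold, then P^(m)(i,j+1) holds. -/
open Module

/-!
Put `c + 2 = α - i` (or `β - j`). Passing from `P(i)` to `P(i + 1)` adds the point `c + 1` to the
left-hand side and the point `i + j + 1` to the right-hand side. If `wt(c + 1) ≥ l`, the new left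
point pays for the new right point and `P(i)` suffices. Otherwise, since `c` is even,
`wt c = wt(c + 1) - 1 < l`, so the left-hand side of `P(i + 2)` is that of `P(i + 1)` while its
right-hand side is at least as large.
-/

open Finset

lemma wtN_add_one_of_even {x : ℕ} (hx : Even x) : wtN (x + 1) = wtN x + 1 := by
  obtain ⟨k, rfl⟩ := hx
  rcases Nat.eq_zero_or_pos k with rfl | hk
  · simp [wtN]
  · have hodd : Nat.digits 2 (k + k + 1) = 1 :: Nat.digits 2 k := by
      rw [← Nat.digits_add 2 one_lt_two 1 k one_lt_two (Or.inl one_ne_zero)]; ring_nf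
    have heven : Nat.digits 2 (k + k) = 0 :: Nat.digits 2 k := by
      rw [← Nat.digits_add 2 one_lt_two 0 k two_pos (Or.inr hk.ne')]; ring_nf
    rw [wtN, wtN, hodd, heven]
    simp

lemma wcount_mono {l : ℕ} {S T : Finset ℕ} (h : S ⊆ T) : wcount l S ≤ wcount l T :=
  card_le_card (filter_subset_filter _ h)

lemma wcount_insert_le (l y : ℕ) (S : Finset ℕ) : wcount l (insert y S) ≤ wcount l S + 1 := by
  unfold wcount
  rw [filter_insert]
  split_ifs
  · exact card_insert_le _ _
  · exact Nat.le_succ _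

lemma wcount_insert_of_le_wtN {l y : ℕ} {S : Finset ℕ} (hy : y ∉ S) (h : l ≤ wtN y) :
    wcount l (insert y S) = wcount l S + 1 := by
  unfold wcount
  rw [filter_insert, if_pos h, card_insert_of_notMem (fun hm => hy (mem_filter.1 hm).1)]

lemma wcount_insert_of_wtN_lt {l y : ℕ} {S : Finset ℕ} (h : wtN y < l) :
    wcount l (insert y S) = wcount l S := by
  unfold wcount
  rw [filter_insert, if_neg h.not_ge]

lemma wcount_Icc_add_one_right_le (l a b : ℕ) :
    wcount l (Icc a (b + 1)) ≤ wcount l (Icc a b) + 1 := by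
  refine (wcount_mono fun x hx => ?_).trans (wcount_insert_le l (b + 1) _)
  simp only [mem_insert, mem_Icc] at hx ⊢
  omega

lemma wcount_Icc_interpolate {l c N d n B : ℕ} (hc : Even c) (hcN : c + 1 ≤ N)
    (h₀ : wcount l (Icc d n) ≤ wcount l (Icc (c + 2) N) + B)
    (h₂ : wcount l (Icc d (n + 2)) ≤ wcount l (Icc c N) + B) :
    wcount l (Icc d (n + 1)) ≤ wcount l (Icc (c + 1) N) + B := by
  by_cases hl : l ≤ wtN (c + 1)
  · have hleft : wcount l (Icc (c + 1) N) = wcount l (Icc (c + 2) N) + 1 := by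
      rw [← insert_Icc_add_one_left_eq_Icc hcN]
      exact wcount_insert_of_le_wtN (by simp) hl
    have hright := wcount_Icc_add_one_right_le l d n
    omega
  · have hc_lt : wtN c < l := by
      rw [wtN_add_one_of_even hc] at hl
      omega
    have hleft : wcount l (Icc c N) = wcount l (Icc (c + 1) N) := by
      rw [← insert_Icc_add_one_left_eq_Icc (by omega : c ≤ N)]
      exact wcount_insert_of_wtN_lt hc_lt
    have hright := wcount_mono (l := l) (Icc_subset_Icc_right (a := d) (by omega : n + 1 ≤ n + 2))
    omega

theorem stmt16_general (m : ℕ) :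
    (∀ i j : ℕ, i + 2 ≤ alph m → j ≤ bet m → Even (alph m - i) →
      Pm m i j → Pm m (i + 2) j → Pm m (i + 1) j) ∧
    (∀ i j : ℕ, i ≤ alph m → j + 2 ≤ bet m → Even (bet m - j) →
      Pm m i j → Pm m i (j + 2) → Pm m i (j + 1)) := by
  constructor
  · intro i j hi _ hev h₀ h₂ l hl₁ hlm
    have H₀ := h₀ l hl₁ hlm
    have H₂ := h₂ l hl₁ hlm
    have hc : Even (alph m - (i + 2)) := by
      rw [← Nat.sub_sub]
      exact hev.tsub even_two
    rw [show alph m - i = alph m - (i + 2) + 2 by omega] at H₀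
    rw [show i + 2 + j = i + j + 2 by omega] at H₂
    rw [show alph m - (i + 1) = alph m - (i + 2) + 1 by omega, show i + 1 + j = i + j + 1 by omega]
    exact wcount_Icc_interpolate hc (by omega) H₀ H₂
  · intro i j _ hj hev h₀ h₂ l hl₁ hlm
    have H₀ := h₀ l hl₁ hlm
    have H₂ := h₂ l hl₁ hlm
    have hc : Even (bet m - (j + 2)) := by
      rw [← Nat.sub_sub]
      exact hev.tsub even_two
    rw [show bet m - j = bet m - (j + 2) + 2 by omega, add_comm (wcount _ _)] at H₀
    rw [show i + (j + 2) = i + j + 2 by omega, add_comm (wcount _ _)] at H₂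
    rw [show bet m - (j + 1) = bet m - (j + 2) + 1 by omega, show i + (j + 1) = i + j + 1 by omega,
      ge_iff_le, add_comm (wcount _ _)]
    exact wcount_Icc_interpolate hc (by omega) H₀ H₂

/-- Lemma 7: interpolation between `P^(m)(i,j)` statements. -/
theorem stmt16 (m : ℕ) (hm : 2 ≤ m) :
    (∀ i j : ℕ, i + 2 ≤ alph m → j ≤ bet m → Even (alph m - i) →
      Pm m i j → Pm m (i + 2) j → Pm m (i + 1) j) ∧
    (∀ i j : ℕ, i ≤ alph m → j + 2 ≤ bet m → Even (bet m - j) →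
      Pm m i j → Pm m i (j + 2) → Pm m i (j + 1)) :=
  stmt16_general m
end
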